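/- arXiv:2310.04401 — 8 statements merged into one kernel-verified Lean document; each statement's English description precedes it below -/
import Mathlib

section
/- The only rational numbers u, v with 0 < u, v < 1 satisfying (1 + 2cos(uπ))(1 + 2cos(vπ)) = 2 are (u,v) = (1/3, 1/2) and (u,v) = (1/2, 1/3). -/
open Real Polynomial

lemma aux_bound (X Y : ℝ) (hX1 : -1 ≤ X) (hX3 : X ≤ 3) (hY1 : -1 ≤ Y) (hY3 : Y ≤ 3)
    (hXY : X * Y = 2) : |X + Y - 3| ≤ 2/3 := by
  have hXpos : 0 < X := by nlinarith
  have hY23 : 2/3 ≤ Y := by nlinarith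
  have hX23 : 2/3 ≤ X := by nlinarith
  rw [abs_le]
  constructor
  · nlinarith [sq_nonneg (6*X - 7)]
  · nlinarith

lemma aux_prod (m : Multiset ℂ) (h : ∀ r ∈ m, ‖3 - r‖ ≤ 2/3) :
    ‖(m.map (fun r => 3 - r)).prod‖ ≤ (2/3) ^ Multiset.card m := by
  induction m using Multiset.induction with
  | empty => simp
  | cons a t ih =>
      simp only [Multiset.map_cons, Multiset.prod_cons, Multiset.card_cons, norm_mul, pow_succ]
      have h1 := h a (Multiset.mem_cons_self a t)
      have h2 := ih (fun r hr => h r (Multiset.mem_cons_of_mem hr))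
      calc ‖3 - a‖ * ‖(t.map (fun r => 3 - r)).prod‖
          ≤ (2/3) * (2/3) ^ Multiset.card t := by
            apply mul_le_mul h1 h2 (by positivity) (by norm_num)
        _ = (2/3) ^ Multiset.card t * (2/3) := by ring

lemma aux_int_pow (n : ℕ) (hn : 0 < n) (ζ : ℂ) (hζ : ζ ^ n = 1) (m : ℤ) :
    IsIntegral ℤ (ζ ^ m) := by
  refine ⟨X ^ n - C 1, Polynomial.monic_X_pow_sub_C 1 hn.ne', ?_⟩
  have : (ζ ^ m) ^ n = 1 := by
    rw [← zpow_natCast (ζ ^ m) n, ← zpow_mul, mul_comm, zpow_mul, zpow_natCast, hζ, one_zpow]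
  simp only [eval₂_sub, eval₂_X_pow, eval₂_C, this]
  norm_num

lemma aux_key (n : ℕ) (hn : 0 < n) (ζ : ℂ) (hζ : ζ ^ n = 1) (a b : ℤ)
    (h2 : (1 + ζ^a + ζ^(-a)) * (1 + ζ^b + ζ^(-b)) = 2) :
    (1 + ζ^a + ζ^(-a)) + (1 + ζ^b + ζ^(-b)) = 3 := by
  set x : ℂ := 1 + ζ^a + ζ^(-a) with hxdef
  set y : ℂ := 1 + ζ^b + ζ^(-b) with hydef
  set s : ℂ := x + y with hsdef
  have hζ0 : ζ ≠ 0 := by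
    intro h0; rw [h0, zero_pow hn.ne'] at hζ; exact zero_ne_one hζ
  -- s is an algebraic integer
  have hsZ : IsIntegral ℤ s := by
    have h1 : IsIntegral ℤ (1 : ℂ) := isIntegral_one
    exact (((h1.add (aux_int_pow n hn ζ hζ a)).add (aux_int_pow n hn ζ hζ (-a))).add
      (((h1.add (aux_int_pow n hn ζ hζ b)).add (aux_int_pow n hn ζ hζ (-b)))))
  have hsQ : IsIntegral ℚ s := hsZ.tower_top
  have hζmem : ζ ∈ IntermediateField.adjoin ℚ ({ζ} : Set ℂ) :=
    IntermediateField.mem_adjoin_simple_self ℚ ζ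
  have hmemx : x ∈ IntermediateField.adjoin ℚ ({ζ} : Set ℂ) :=
    add_mem (add_mem (one_mem _) (zpow_mem hζmem a)) (zpow_mem hζmem (-a))
  have hmemy : y ∈ IntermediateField.adjoin ℚ ({ζ} : Set ℂ) :=
    add_mem (add_mem (one_mem _) (zpow_mem hζmem b)) (zpow_mem hζmem (-b))
  have hmem : s ∈ IntermediateField.adjoin ℚ ({ζ} : Set ℂ) := add_mem hmemx hmemy
  have hζZ : IsIntegral ℤ ζ := by
    have := aux_int_pow n hn ζ hζ 1; rwa [zpow_one] at this
  -- every root of the minimal polynomial is close to 3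
  have claim : ∀ r ∈ (minpoly ℚ s).aroots ℂ, ‖3 - r‖ ≤ 2/3 := by
    intro r hr
    have haeval : Polynomial.aeval r (minpoly ℚ s) = 0 :=
      ((Polynomial.mem_aroots).mp hr).2
    set zK : IntermediateField.adjoin ℚ ({ζ} : Set ℂ) := ⟨ζ, hζmem⟩ with hzK
    set xK : IntermediateField.adjoin ℚ ({ζ} : Set ℂ) := 1 + zK^a + zK^(-a) with hxK
    set yK : IntermediateField.adjoin ℚ ({ζ} : Set ℂ) := 1 + zK^b + zK^(-b) with hyK
    obtain ⟨φ, hφ⟩ := IntermediateField.exists_algHom_adjoin_of_splits_of_aeval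
      (F := ℚ) (E := ℂ) (K := ℂ) (S := ({ζ} : Set ℂ))
      (fun t ht => by
        rw [Set.mem_singleton_iff] at ht
        exact ⟨ht ▸ hζZ.tower_top, IsAlgClosed.splits _⟩)
      hmem haeval
    have hxKc : (xK : ℂ) = x := by push_cast [hxK, hzK]; rfl
    have hyKc : (yK : ℂ) = y := by push_cast [hyK, hzK]; rfl
    have hsplit : (⟨s, hmem⟩ : IntermediateField.adjoin ℚ ({ζ} : Set ℂ)) = xK + yK := by
      apply Subtype.ext; push_cast [hxKc, hyKc]; rfl
    have hxyK : xK * yK = 2 := by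
      apply Subtype.ext; push_cast [hxKc, hyKc]; exact h2
    set w : ℂ := φ zK with hw
    have hwn : w ^ n = 1 := by
      rw [hw, ← map_pow]
      have hzn : zK ^ n = 1 := by apply Subtype.ext; push_cast [hzK]; exact hζ
      rw [hzn, map_one]
    have habsw : ‖w‖ = 1 := by
      have h1 : ‖w‖ ^ n = 1 := by
        rw [← norm_pow, hwn, norm_one]
      rcases lt_trichotomy ‖w‖ 1 with hlt | heq | hgt
      · have := pow_lt_one₀ (norm_nonneg w) hlt hn.ne'
        rw [h1] at this; norm_num at this
      · exact heq
      · have := one_lt_pow₀ hgt hn.ne'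
        rw [h1] at this; norm_num at this
    have hw0 : w ≠ 0 := by
      intro h0; rw [h0, norm_zero] at habsw; norm_num at habsw
    have hzK0 : zK ≠ 0 := by
      intro h0
      apply hζ0
      have := congrArg (fun t : IntermediateField.adjoin ℚ ({ζ} : Set ℂ) => (t : ℂ)) h0
      rw [hzK] at this; simpa using this
    have hφx : φ xK = 1 + w^a + w^(-a) := by
      rw [hxK, map_add, map_add, map_one, map_zpow₀, map_zpow₀]
    have hφy : φ yK = 1 + w^b + w^(-b) := by
      rw [hyK, map_add, map_add, map_one, map_zpow₀, map_zpow₀]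
    -- both images are real, in [-1, 3]
    have key : ∀ m : ℤ, 1 + w^m + w^(-m) = ((1 + 2 * (w^m).re : ℝ) : ℂ) ∧
        -1 ≤ 1 + 2 * (w^m).re ∧ 1 + 2 * (w^m).re ≤ 3 := by
      intro m
      have habs : ‖w ^ m‖ = 1 := by
        rw [norm_zpow, habsw, one_zpow]
      have hconj : w^(-m) = (starRingEnd ℂ) (w^m) := by
        rw [zpow_neg, Complex.inv_eq_conj habs]
      have hre : |(w^m).re| ≤ 1 := by
        have := Complex.abs_re_le_norm (w^m); rwa [habs] at this
      rw [abs_le] at hre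
      refine ⟨?_, by linarith [hre.1], by linarith [hre.2]⟩
      rw [hconj, add_assoc, Complex.add_conj]
      push_cast; ring
    obtain ⟨hXc, hX1, hX3⟩ := key a
    obtain ⟨hYc, hY1, hY3⟩ := key b
    have hprod : (1 + 2 * (w^a).re) * (1 + 2 * (w^b).re) = 2 := by
      have : φ xK * φ yK = 2 := by rw [← map_mul, hxyK, map_ofNat]
      rw [hφx, hφy, hXc, hYc] at this
      exact_mod_cast this
    have hrval : r = ((1 + 2 * (w^a).re) + (1 + 2 * (w^b).re) : ℝ) := by
      rw [← hφ, hsplit, map_add, hφx, hφy, hXc, hYc]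
      push_cast; ring
    rw [hrval]
    have : (3 : ℂ) - ((1 + 2 * (w^a).re) + (1 + 2 * (w^b).re) : ℝ) =
        ((3 - ((1 + 2 * (w^a).re) + (1 + 2 * (w^b).re)) : ℝ) : ℂ) := by push_cast; ring
    rw [this, Complex.norm_real, Real.norm_eq_abs, abs_sub_comm]
    exact aux_bound _ _ hX1 hX3 hY1 hY3 hprod
  -- now evaluate the minimal polynomial at 3
  set pQ := minpoly ℚ s with hpQ
  set pC := pQ.map (algebraMap ℚ ℂ) with hpC
  have hmonicQ : pQ.Monic := minpoly.monic hsQ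
  have hmonicC : pC.Monic := hmonicQ.map _
  have hsplits : pC.Splits :=
    IsAlgClosed.splits pC
  have heval3 : pC.eval 3 = ((pC.roots).map (fun r => 3 - r)).prod := by
    conv_lhs => rw [hsplits.eq_prod_roots_of_monic hmonicC]
    rw [Polynomial.eval_multiset_prod]
    simp
  have hcard : Multiset.card pC.roots = pQ.natDegree := by
    rw [Polynomial.splits_iff_card_roots.mp hsplits]
    exact Polynomial.natDegree_map _
  have hdeg : 1 ≤ pQ.natDegree := minpoly.natDegree_pos hsQ
  have hbound : ‖pC.eval 3‖ ≤ 2/3 := by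
    rw [heval3]
    calc ‖(pC.roots.map (fun r => 3 - r)).prod‖
        ≤ (2/3) ^ Multiset.card pC.roots := aux_prod _ claim
      _ ≤ (2/3) ^ 1 := by
          rw [hcard]
          exact pow_le_pow_of_le_one (by norm_num) (by norm_num) hdeg
      _ = 2/3 := pow_one _
  -- pC.eval 3 is an integer
  have hZQ : pQ = (minpoly ℤ s).map (algebraMap ℤ ℚ) :=
    minpoly.isIntegrallyClosed_eq_field_fractions' ℚ hsZ
  have hevalInt : pC.eval 3 = (((minpoly ℤ s).eval 3 : ℤ) : ℂ) := by
    rw [hpC, hZQ, Polynomial.map_map]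
    have h3 : (3 : ℂ) = (algebraMap ℚ ℂ).comp (algebraMap ℤ ℚ) (3 : ℤ) := by norm_num
    rw [h3, Polynomial.eval_map, Polynomial.eval₂_at_apply]
    norm_num
  -- conclude the integer value is 0
  have hint0 : (minpoly ℤ s).eval 3 = 0 := by
    by_contra h0
    have h1 : (1 : ℝ) ≤ |(((minpoly ℤ s).eval 3 : ℤ) : ℝ)| := by
      rw [← Int.cast_abs]
      exact_mod_cast Int.one_le_abs (by exact_mod_cast h0)
    rw [hevalInt] at hbound
    rw [Complex.norm_intCast] at hbound
    linarith
  -- hence 3 is a root of the minimal polynomial over ℚ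
  have hroot : pQ.IsRoot 3 := by
    rw [Polynomial.IsRoot, hZQ, Polynomial.eval_map]
    have h3 : (3 : ℚ) = algebraMap ℤ ℚ (3 : ℤ) := by norm_num
    rw [h3, Polynomial.eval₂_at_apply, hint0, map_zero]
  have hdvd : (X - C (3:ℚ)) ∣ pQ := Polynomial.dvd_iff_isRoot.mpr hroot
  have hassoc : Associated (X - C (3:ℚ)) pQ :=
    (Polynomial.irreducible_X_sub_C (3:ℚ)).associated_of_dvd (minpoly.irreducible hsQ) hdvd
  have hpQeq : pQ = X - C (3:ℚ) :=
    Polynomial.eq_of_monic_of_associated hmonicQ (Polynomial.monic_X_sub_C _) hassoc.symm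
  have haev : Polynomial.aeval s pQ = 0 := minpoly.aeval ℚ s
  rw [hpQeq] at haev
  simp only [map_sub, Polynomial.aeval_X, Polynomial.aeval_C] at haev
  rw [sub_eq_zero] at haev
  rw [haev]
  norm_num

lemma aux_half (u : ℚ) (hu : 0 < u) (hu1 : u < 1) (h : Real.cos ((u:ℝ) * π) = 0) : u = 1/2 := by
  have h0 : (0:ℝ) < (u:ℝ) := by exact_mod_cast hu
  have h1 : (u:ℝ) < 1 := by exact_mod_cast hu1
  have hmem : (u:ℝ) * π ∈ Set.Icc 0 π := by
    constructor
    · positivity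
    · nlinarith [pi_pos]
  have hmem2 : π/2 ∈ Set.Icc (0:ℝ) π := by
    constructor <;> nlinarith [pi_pos]
  have heq : (u:ℝ) * π = π/2 := by
    apply Real.injOn_cos hmem hmem2
    rw [h, Real.cos_pi_div_two]
  have heq2 : (u:ℝ) * π = (1/2) * π := by linarith
  have : (u:ℝ) = 1/2 := mul_right_cancel₀ pi_ne_zero heq2
  rw [show (1/2:ℝ) = ((1/2:ℚ):ℝ) by norm_num] at this
  exact_mod_cast this

lemma aux_third (u : ℚ) (hu : 0 < u) (hu1 : u < 1) (h : Real.cos ((u:ℝ) * π) = 1/2) : u = 1/3 := by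
  have h0 : (0:ℝ) < (u:ℝ) := by exact_mod_cast hu
  have h1 : (u:ℝ) < 1 := by exact_mod_cast hu1
  have hmem : (u:ℝ) * π ∈ Set.Icc 0 π := by
    constructor
    · positivity
    · nlinarith [pi_pos]
  have hmem2 : π/3 ∈ Set.Icc (0:ℝ) π := by
    constructor <;> nlinarith [pi_pos]
  have heq : (u:ℝ) * π = π/3 := by
    apply Real.injOn_cos hmem hmem2
    rw [h, Real.cos_pi_div_three]
  have heq2 : (u:ℝ) * π = (1/3) * π := by linarith
  have : (u:ℝ) = 1/3 := mul_right_cancel₀ pi_ne_zero heq2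
  rw [show (1/3:ℝ) = ((1/3:ℚ):ℝ) by norm_num] at this
  exact_mod_cast this

theorem stmt_3 (u v : ℚ) (hu : 0 < u) (hu1 : u < 1) (hv : 0 < v) (hv1 : v < 1)
    (h : (1 + 2 * Real.cos (u * π)) * (1 + 2 * Real.cos (v * π)) = 2) :
    (u = 1/3 ∧ v = 1/2) ∨ (u = 1/2 ∧ v = 1/3) := by
  set d : ℕ := u.den * v.den with hd
  have hdpos : 0 < d := Nat.mul_pos u.pos v.pos
  have hdR : (d:ℝ) ≠ 0 := by exact_mod_cast hdpos.ne'
  set ζ : ℂ := Complex.exp (Real.pi * Complex.I / d) with hζdef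
  have hζn : ζ ^ (2*d) = 1 := by
    rw [hζdef, ← Complex.exp_nat_mul]
    have hdC : ((d : ℕ) : ℂ) ≠ 0 := Nat.cast_ne_zero.mpr hdpos.ne'
    have : ((2*d : ℕ) : ℂ) * (Real.pi * Complex.I / d) = 2 * Real.pi * Complex.I := by
      push_cast
      field_simp
    rw [this, Complex.exp_two_pi_mul_I]
  -- express 1 + 2 cos(uπ) as 1 + ζ^a + ζ^(-a)
  have main : ∀ (q : ℚ) (m : ℤ), (m : ℝ) = (q:ℝ) * d →
      1 + ζ^m + ζ^(-m) = (((1 + 2 * Real.cos ((q:ℝ) * π)) : ℝ) : ℂ) := by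
    intro q m hm
    have hpow : ζ^m = Complex.exp ((((q:ℝ) * π : ℝ)) * Complex.I) := by
      rw [hζdef, ← Complex.exp_int_mul]
      congr 1
      have : ((m:ℂ)) = ((q:ℝ) * d : ℝ) := by exact_mod_cast congrArg (fun t : ℝ => (t : ℂ)) hm
      rw [this]
      have hdC : ((d : ℕ) : ℂ) ≠ 0 := Nat.cast_ne_zero.mpr hdpos.ne'
      push_cast
      field_simp
    have hpow' : ζ^(-m) = Complex.exp ((-( (q:ℝ) * π) : ℝ) * Complex.I) := by
      rw [zpow_neg, hpow, ← Complex.exp_neg]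
      congr 1
      push_cast
      ring
    rw [hpow, hpow', Complex.exp_mul_I, Complex.exp_mul_I]
    push_cast
    rw [Complex.cos_neg, Complex.sin_neg]
    ring
  have hma : ((u.num * v.den : ℤ) : ℝ) = (u:ℝ) * d := by
    have : (u:ℝ) = (u.num : ℝ) / (u.den : ℝ) := by rw [Rat.cast_def]
    rw [this, hd]
    have hden : ((u.den:ℝ)) ≠ 0 := by exact_mod_cast u.den_nz
    push_cast
    field_simp
  have hmb : ((v.num * u.den : ℤ) : ℝ) = (v:ℝ) * d := by
    have : (v:ℝ) = (v.num : ℝ) / (v.den : ℝ) := by rw [Rat.cast_def]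
    rw [this, hd]
    have hden : ((v.den:ℝ)) ≠ 0 := by exact_mod_cast v.den_nz
    push_cast
    field_simp
  have hxc := main u (u.num * v.den) hma
  have hyc := main v (v.num * u.den) hmb
  have h2 : (1 + ζ^(u.num * v.den : ℤ) + ζ^(-(u.num * v.den : ℤ))) *
      (1 + ζ^(v.num * u.den : ℤ) + ζ^(-(v.num * u.den : ℤ))) = 2 := by
    rw [hxc, hyc, ← Complex.ofReal_mul]
    rw [h]
    norm_num
  have hsum := aux_key (2*d) (by positivity) ζ hζn (u.num * v.den) (v.num * u.den) h2
  rw [hxc, hyc] at hsum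
  have hsumR : (1 + 2 * Real.cos ((u:ℝ) * π)) + (1 + 2 * Real.cos ((v:ℝ) * π)) = 3 := by
    have : (((1 + 2 * Real.cos ((u:ℝ) * π)) + (1 + 2 * Real.cos ((v:ℝ) * π)) : ℝ) : ℂ) = ((3:ℝ):ℂ) := by
      push_cast
      push_cast at hsum
      linear_combination hsum
    exact_mod_cast this
  -- now pure real algebra
  set c1 := Real.cos ((u:ℝ) * π) with hc1
  set c2 := Real.cos ((v:ℝ) * π) with hc2
  have hprodR : (1 + 2*c1) * (1 + 2*c2) = 2 := h
  have hfact : (c1 - 0) * (c1 - 1/2) = 0 := by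
    linear_combination (-(1/4))*hprodR + ((1+2*c1)/4)*hsumR
  rcases mul_eq_zero.mp hfact with h1 | h1
  · have hc1' : c1 = 0 := by linarith
    have hc2' : c2 = 1/2 := by linarith
    right
    exact ⟨aux_half u hu hu1 hc1', aux_third v hv hv1 hc2'⟩
  · have hc1' : c1 = 1/2 := by linarith
    have hc2' : c2 = 0 := by linarith
    left
    exact ⟨aux_third u hu hu1 hc1', aux_half v hv hv1 hc2'⟩
end

section
/- Let η be a primitive m-th root of unity and let v be a valuation on ℚ(η) extending the 2-adic valuation with v(2) = 1. Then v(η + 1 + η^{−1}) = ∞ if m = 3, v(η + 1 + η^{−1}) = 1/2^k if m = 3·2^{k+1} for some k ≥ 0, and v(η + 1 + η^{−1}) = 0 otherwise. -/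
section Aux

variable {K : Type*} [Field K] [CharZero K] (v : AddValuation K (WithTop ℚ))

-- arithmetic helpers in WithTop ℚ
lemma addeq {a b : WithTop ℚ} (ha : 0 ≤ a) (hb : 0 ≤ b) (h : a + b = 0) : a = 0 := by
  have ha' : a ≠ ⊤ := by
    rintro rfl
    simp [top_add] at h
  have hb' : b ≠ ⊤ := by
    rintro rfl
    simp [add_top] at h
  lift a to ℚ using ha'
  lift b to ℚ using hb'
  have : a + b = 0 := by exact_mod_cast h
  have ha2 : (0:ℚ) ≤ a := by exact_mod_cast ha
  have hb2 : (0:ℚ) ≤ b := by exact_mod_cast hb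
  have : a = 0 := by linarith
  exact_mod_cast this

lemma canceleq {a b : WithTop ℚ} (hb : b ≠ ⊤) (h : a + b = b) : a = 0 := by
  have ha' : a ≠ ⊤ := by
    rintro rfl
    simp [top_add] at h
    exact hb h.symm
  lift a to ℚ using ha'
  lift b to ℚ using hb
  have : a + b = b := by exact_mod_cast h
  have : a = 0 := by linarith
  exact_mod_cast this

lemma vnat_nonneg (n : ℕ) : 0 ≤ v (n : K) := by
  induction n with
  | zero => simp
  | succ n ih =>
    push_cast
    refine le_trans ?_ (v.map_add (n : K) 1)
    simp [ih]

lemma vint_nonneg (n : ℤ) : 0 ≤ v (n : K) := by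
  rcases le_or_gt 0 n with h | h
  · lift n to ℕ using h
    exact_mod_cast vnat_nonneg v n
  · have : ((n : K)) = -((n.natAbs : K)) := by
      have h2 : (n.natAbs : ℤ) = -n := by omega
      have h3 : ((n.natAbs : ℤ) : K) = ((-n : ℤ) : K) := by rw [h2]
      rw [Int.cast_natCast, Int.cast_neg] at h3
      linear_combination h3
    rw [this, v.map_neg]
    exact vnat_nonneg v n.natAbs

end Aux

section Aux2

variable {K : Type*} [Field K] [CharZero K] (v : AddValuation K (WithTop ℚ))
  (hv : v 2 = 1)

include hv

lemma vodd (n : ℕ) (hn : Odd n) : v (n : K) = 0 := by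
  have h0 : (0:WithTop ℚ) ≤ v (n : K) := vnat_nonneg v n
  rcases h0.lt_or_eq with hlt | heq
  · exfalso
    have hcop : Nat.Coprime n 2 := hn.coprime_two_right
    -- Bezout
    have hb := Int.gcd_eq_gcd_ab (n : ℤ) 2
    have hg : Int.gcd (n : ℤ) 2 = 1 := by
      simpa [Int.gcd] using hcop
    rw [hg] at hb
    -- (1 : K) = n * a + 2 * b
    have hK : (1 : K) = (n : K) * ((Int.gcdA n 2 : ℤ) : K)
        + 2 * ((Int.gcdB n 2 : ℤ) : K) := by
      exact_mod_cast congrArg (fun z : ℤ => (z : K)) hb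
    have h1 : v (1 : K) = 0 := v.map_one
    have hle := v.map_add ((n : K) * ((Int.gcdA n 2 : ℤ) : K))
      (2 * ((Int.gcdB n 2 : ℤ) : K))
    rw [← hK, h1] at hle
    have ha : (0:WithTop ℚ) < v ((n : K) * ((Int.gcdA n 2 : ℤ) : K)) := by
      rw [v.map_mul]
      have := vint_nonneg v (Int.gcdA n 2) (K := K)
      calc (0:WithTop ℚ) < v (n:K) + 0 := by simpa using hlt
        _ ≤ _ := by exact add_le_add le_rfl this
    have hb2 : (0:WithTop ℚ) < v (2 * ((Int.gcdB n 2 : ℤ) : K)) := by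
      rw [v.map_mul, hv]
      have := vint_nonneg v (Int.gcdB n 2) (K := K)
      calc (0:WithTop ℚ) < 1 + 0 := by norm_num
        _ ≤ _ := by exact add_le_add le_rfl this
    have : (0:WithTop ℚ) < min (v ((n : K) * ((Int.gcdA n 2 : ℤ) : K)))
        (v (2 * ((Int.gcdB n 2 : ℤ) : K))) := lt_min ha hb2
    exact absurd (lt_of_lt_of_le this hle) (lt_irrefl 0)
  · exact heq.symm

end Aux2

section Aux3

variable {K : Type*} [Field K] [CharZero K] (v : AddValuation K (WithTop ℚ))

lemma vroot (x : K) (n : ℕ) (hn : 0 < n) (h : x ^ n = 1) : v x = 0 := by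
  have hx0 : x ≠ 0 := by
    intro h0; rw [h0] at h; simp [zero_pow hn.ne'] at h
  have h1 : (n : ℕ) • v x = 0 := by rw [← v.map_pow, h, v.map_one]
  have hne : v x ≠ ⊤ := v.ne_top_iff.mpr hx0
  lift v x to ℚ using hne with q hq
  have h2 : (n : ℚ) * q = 0 := by
    have : n • q = (0:ℚ) := by exact_mod_cast h1
    simpa [nsmul_eq_mul] using this
  have hq0 : q = 0 := by
    rcases mul_eq_zero.mp h2 with h' | h'
    · exact absurd h' (by exact_mod_cast hn.ne')
    · exact h'
  exact_mod_cast hq0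

end Aux3

section Aux4

variable {K : Type*} [Field K] [CharZero K] (v : AddValuation K (WithTop ℚ))
  (hv : v 2 = 1)

include hv

-- If x has odd order q > 1 (i.e. x^q = 1, x ≠ 1, q odd), then v (x - 1) = 0
lemma voddroot (x : K) (q : ℕ) (hq : Odd q) (h1 : x ≠ 1) (h : x ^ q = 1) :
    v (x - 1) = 0 := by
  set t : K := x - 1 with ht
  have ht0 : t ≠ 0 := sub_ne_zero.mpr h1
  have hqpos : 0 < q := hq.pos
  have hvx : v x = 0 := vroot v x q hqpos h
  have hvt : (0:WithTop ℚ) ≤ v t := by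
    refine le_trans ?_ (v.map_sub x 1)
    simp [hvx]
  have hq1 : q ≠ 1 := by
    rintro rfl
    simp at h
    exact h1 h
  obtain ⟨r, hr⟩ : ∃ r, q = r + 2 := ⟨q - 2, by omega⟩
  -- binomial expansion
  have e1 : (1 : K) = ∑ k ∈ Finset.range (q + 1), t ^ k * (q.choose k : K) := by
    have : (t + 1) ^ q = 1 := by
      rw [ht]; simpa using h
    rw [← this, add_pow]
    simp
  set S : K := ∑ k ∈ Finset.range (r + 1), t ^ k * (q.choose (k + 2) : K) with hS
  have e2a : ∑ k ∈ Finset.range (r + 1), t ^ (k + 1 + 1) * ((q.choose (k + 1 + 1) : ℕ) : K)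
      = t ^ 2 * S := by
    rw [hS, Finset.mul_sum]
    apply Finset.sum_congr rfl
    intro k _
    have : k + 1 + 1 = k + 2 := by omega
    rw [this]
    ring
  have e2 : ∑ k ∈ Finset.range (q + 1), t ^ k * (q.choose k : K)
      = t ^ 2 * S + t * (q : K) + 1 := by
    conv_lhs => rw [hr]
    rw [Finset.sum_range_succ' (fun k => t ^ k * ((r+2).choose k : K)) (r + 2)]
    rw [Finset.sum_range_succ' (fun k => t ^ (k+1) * ((r+2).choose (k+1) : K)) (r + 1)]
    simp only [pow_zero, one_mul, Nat.choose_zero_right, Nat.cast_one,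
      Nat.choose_one_right, pow_one]
    rw [← hr, e2a]
    push_cast [hr, Nat.choose_one_right]
    ring
  have e3 : t * ((q : K) + t * S) = 0 := by
    have := e1.trans e2
    linear_combination -this
  have e4 : (q : K) = -(t * S) := by
    rcases mul_eq_zero.mp e3 with h' | h'
    · exact absurd h' ht0
    · linear_combination h'
  have hvS : (0:WithTop ℚ) ≤ v S := by
    rw [hS]
    refine v.map_le_sum ?_
    intro i _
    rw [v.map_mul, v.map_pow]
    have h1' : (0:WithTop ℚ) ≤ i • v t := by
      rcases Nat.eq_zero_or_pos i with rfl | hi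
      · simp
      · calc (0:WithTop ℚ) = i • (0:WithTop ℚ) := by simp
          _ ≤ i • v t := by exact nsmul_le_nsmul_right hvt i
    have h2' : (0:WithTop ℚ) ≤ v ((q.choose (i+2) : ℕ) : K) := vnat_nonneg v _
    calc (0:WithTop ℚ) ≤ 0 + 0 := by norm_num
      _ ≤ i • v t + v ((q.choose (i+2) : ℕ) : K) := add_le_add h1' h2'
  have hvq : v ((q:ℕ) : K) = 0 := vodd v hv q hq
  have e5 : v t + v S = 0 := by
    rw [← v.map_mul, ← v.map_neg, ← e4, hvq]
  exact addeq hvt hvS e5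

-- If x^N has odd order q > 1, then v (x - 1) = 0
lemma vsubone (x : K) (hx : v x = 0) (N q : ℕ) (hq : Odd q)
    (hN : x ^ N ≠ 1) (h : (x ^ N) ^ q = 1) : v (x - 1) = 0 := by
  have h0 : v (x ^ N - 1) = 0 := voddroot v hv (x ^ N) q hq hN h
  have hgeom : (∑ i ∈ Finset.range N, x ^ i) * (x - 1) = x ^ N - 1 := geom_sum_mul x N
  have hvsum : (0:WithTop ℚ) ≤ v (∑ i ∈ Finset.range N, x ^ i) := by
    refine v.map_le_sum ?_
    intro i _
    rw [v.map_pow, hx]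
    simp
  have hvx1 : (0:WithTop ℚ) ≤ v (x - 1) := by
    refine le_trans ?_ (v.map_sub x 1)
    simp [hx]
  have : v (x - 1) + v (∑ i ∈ Finset.range N, x ^ i) = 0 := by
    rw [add_comm, ← v.map_mul, hgeom, h0]
  exact addeq hvx1 hvsum this

-- primitive n-th root with n not a power of two has v (μ - 1) = 0
lemma vprim_zero (μ : K) (n : ℕ) (hn : 0 < n) (hμ : IsPrimitiveRoot μ n)
    (hnp : ¬ ∃ e, n = 2 ^ e) : v (μ - 1) = 0 := by
  set q : ℕ := n / 2 ^ (n.factorization 2) with hqdef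
  have hqdvd : q ∣ n := Nat.ordCompl_dvd n 2
  have hqodd : Odd q := by
    rw [Nat.odd_iff, Nat.two_dvd_ne_zero.symm] at *
    exact Nat.not_dvd_ordCompl Nat.prime_two hn.ne'
  have hq1 : q ≠ 1 := by
    intro h1
    apply hnp
    refine ⟨n.factorization 2, ?_⟩
    have := Nat.ordProj_mul_ordCompl_eq_self n 2
    rw [← hqdef] at this
    rw [h1, mul_one] at this
    exact this.symm
  have hqpos : 0 < q := Nat.pos_of_dvd_of_pos hqdvd hn
  set N : ℕ := n / q with hNdef
  have hNq : N * q = n := Nat.div_mul_cancel hqdvd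
  have hNpos : 0 < N := by
    rcases Nat.eq_zero_or_pos N with h0 | h0
    · rw [h0, zero_mul] at hNq; omega
    · exact h0
  have hNlt : N < n := by
    have : 1 < q := by omega
    rcases Nat.lt_or_ge N n with h' | h'
    · exact h'
    · exfalso; nlinarith [hNq]
  have hx : v μ = 0 := vroot v μ n hn hμ.pow_eq_one
  refine vsubone v hv μ hx N q hqodd ?_ ?_
  · exact hμ.pow_ne_one_of_pos_of_lt hNpos.ne' hNlt
  · rw [← pow_mul, hNq]; exact hμ.pow_eq_one

-- 2-power roots: if ζ^(2^s) = -1 then v (ζ - 1) = 1/2^s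
lemma vpow2 : ∀ (s : ℕ) (ζ : K), ζ ^ (2 ^ s) = -1 →
    v (ζ - 1) = ((1 / 2 ^ s : ℚ) : WithTop ℚ) := by
  intro s
  induction s with
  | zero =>
    intro ζ hζ
    simp only [pow_zero, pow_one] at hζ
    subst hζ
    have : (-1 : K) - 1 = -2 := by ring
    rw [this, v.map_neg, hv]
    norm_num
  | succ s ih =>
    intro ζ hζ
    have h2 : (ζ ^ 2) ^ (2 ^ s) = -1 := by
      rw [← pow_mul, ← pow_succ']
      exact hζ
    have hIH := ih (ζ ^ 2) h2
    have hfac : ζ ^ 2 - 1 = (ζ - 1) * (ζ + 1) := by ring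
    have hsum : v (ζ - 1) + v (ζ + 1) = ((1 / 2 ^ s : ℚ) : WithTop ℚ) := by
      rw [← v.map_mul, ← hfac, hIH]
    have heq : v (ζ - 1) = v (ζ + 1) := by
      by_contra hne
      have hd : v ((ζ + 1) + -(ζ - 1)) = min (v (ζ + 1)) (v (-(ζ - 1))) := by
        apply v.map_add_of_distinct_val
        rw [v.map_neg]
        exact fun h => hne h.symm
      have h2' : (ζ + 1) + -(ζ - 1) = 2 := by ring
      rw [h2', hv, v.map_neg] at hd
      have hle1 : (1:WithTop ℚ) ≤ v (ζ - 1) := by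
        rw [hd]; exact min_le_right _ _
      have hle2 : (1:WithTop ℚ) ≤ v (ζ + 1) := by
        rw [hd]; exact min_le_left _ _
      have : (2:WithTop ℚ) ≤ ((1 / 2 ^ s : ℚ) : WithTop ℚ) := by
        calc (2:WithTop ℚ) = 1 + 1 := by norm_num
          _ ≤ v (ζ - 1) + v (ζ + 1) := add_le_add hle1 hle2
          _ = _ := hsum
      have h2q : (2:ℚ) ≤ 1 / 2 ^ s := by
        have hc : ((2:ℚ):WithTop ℚ) = (2:WithTop ℚ) := by norm_cast
        rw [← hc] at this
        exact_mod_cast WithTop.coe_le_coe.mp this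
      have : (1 / 2 ^ s : ℚ) ≤ 1 := by
        rw [div_le_one (by positivity)]
        exact one_le_pow₀ (by norm_num)
      linarith
    rw [← heq] at hsum
    have hnetop : v (ζ - 1) ≠ ⊤ := by
      intro htop
      rw [htop] at hsum
      simp [top_add] at hsum
    lift v (ζ - 1) to ℚ using hnetop with a ha
    have : a + a = 1 / 2 ^ s := by exact_mod_cast hsum
    have haval : a = 1 / 2 ^ (s + 1) := by
      field_simp at this ⊢
      rw [pow_succ]
      linarith
    exact_mod_cast haval

end Aux4

theorem stmt_5 {K : Type*} [Field K] [CharZero K] (m : ℕ) (hm : 0 < m)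
    (η : K) (hη : IsPrimitiveRoot η m)
    (v : AddValuation K (WithTop ℚ)) (hv : v 2 = 1) :
    (m = 3 → v (η + 1 + η⁻¹) = ⊤) ∧
    (∀ k : ℕ, m = 3 * 2 ^ (k + 1) → v (η + 1 + η⁻¹) = ((1 / 2 ^ k : ℚ) : WithTop ℚ)) ∧
    ((m ≠ 3 ∧ ¬ ∃ k : ℕ, m = 3 * 2 ^ (k + 1)) → v (η + 1 + η⁻¹) = ((0 : ℚ) : WithTop ℚ)) := by
  have hη0 : η ≠ 0 := by
    intro h0
    have := hη.pow_eq_one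
    rw [h0, zero_pow hm.ne'] at this
    simp at this
  have vη : v η = 0 := vroot v η m hm hη.pow_eq_one
  have hα : η + 1 + η⁻¹ = (η ^ 2 + η + 1) * η⁻¹ := by
    field_simp
  have valph : v (η + 1 + η⁻¹) = v (η ^ 2 + η + 1) := by
    rw [hα, v.map_mul, v.map_inv, vη]
    simp
  refine ⟨?_, ?_, ?_⟩
  · -- m = 3
    rintro rfl
    have hη1 : η ≠ 1 := hη.ne_one (by norm_num)
    have h0 : (η - 1) * (η ^ 2 + η + 1) = 0 := by
      linear_combination hη.pow_eq_one
    have hq : η ^ 2 + η + 1 = 0 := by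
      rcases mul_eq_zero.mp h0 with h' | h'
      · exact absurd h' (sub_ne_zero.mpr hη1)
      · exact h'
    rw [valph, hq, v.map_zero]
  · -- m = 3 * 2^(k+1)
    rintro k rfl
    have h2p : (0:ℕ) < 2 ^ k := Nat.pow_pos (n := k) (by norm_num)
    have h2p' : (0:ℕ) < 2 ^ (k+1) := Nat.pow_pos (n := k+1) (by norm_num)
    have hodd3 : Odd 3 := ⟨1, by norm_num⟩
    have hvsub : v (η - 1) = 0 := by
      refine vsubone v hv η vη (2 ^ (k+1)) 3 hodd3 ?_ ?_
      · refine hη.pow_ne_one_of_pos_of_lt h2p'.ne' ?_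
        omega
      · rw [← pow_mul, mul_comm]
        exact hη.pow_eq_one
    have hneg : η ^ (3 * 2 ^ k) = -1 := by
      have hsq : (η ^ (3 * 2 ^ k)) ^ 2 = 1 := by
        rw [← pow_mul]
        have : 3 * 2 ^ k * 2 = 3 * 2 ^ (k + 1) := by rw [pow_succ]; ring
        rw [this]
        exact hη.pow_eq_one
      have hne : η ^ (3 * 2 ^ k) ≠ 1 := by
        refine hη.pow_ne_one_of_pos_of_lt (by positivity) ?_
        have : 2 ^ k < 2 ^ (k+1) := by
          rw [pow_succ]; omega
        omega
      have h0 : (η ^ (3 * 2 ^ k) - 1) * (η ^ (3 * 2 ^ k) + 1) = 0 := by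
        linear_combination hsq
      rcases mul_eq_zero.mp h0 with h' | h'
      · exact absurd (by linear_combination h') hne
      · linear_combination h'
    have hv3 : v (η ^ 3 - 1) = ((1 / 2 ^ k : ℚ) : WithTop ℚ) := by
      refine vpow2 v hv k (η ^ 3) ?_
      rw [← pow_mul]
      exact hneg
    have hfac : η ^ 3 - 1 = (η ^ 2 + η + 1) * (η - 1) := by ring
    rw [hfac, v.map_mul, hvsub, add_zero] at hv3
    rw [valph, hv3]
  · -- otherwise
    rintro ⟨h3, hnk⟩
    by_cases hm1 : m = 1
    · subst hm1
      have hη1 : η = 1 := IsPrimitiveRoot.one_right_iff.mp hη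
      have h3K : η + 1 + η⁻¹ = ((3:ℕ) : K) := by
        rw [hη1]; norm_num
      rw [h3K, vodd v hv 3 ⟨1, by norm_num⟩]
      norm_cast
    · have hm2 : 2 ≤ m := by omega
      have hη1 : η ≠ 1 := hη.ne_one (by omega)
      have hη3 : η ^ 3 ≠ 1 := by
        intro h
        have hdvd := hη.dvd_of_pow_eq_one 3 h
        have hle : m ≤ 3 := Nat.le_of_dvd (by norm_num) hdvd
        interval_cases m
        · exact absurd hdvd (by norm_num)
        · exact h3 rfl
      have claim : v (η ^ 3 - 1) = v (η - 1) := by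
        by_cases hp : ∃ e, m = 2 ^ e
        · obtain ⟨e, rfl⟩ := hp
          obtain ⟨e', rfl⟩ : ∃ e', e = e' + 1 := by
            refine ⟨e - 1, ?_⟩
            rcases Nat.eq_zero_or_pos e with h0 | h0
            · rw [h0] at hm2; norm_num at hm2
            · omega
          have hneg : η ^ (2 ^ e') = -1 := by
            have hsq : (η ^ (2 ^ e')) ^ 2 = 1 := by
              rw [← pow_mul, ← pow_succ]
              exact hη.pow_eq_one
            have hne : η ^ (2 ^ e') ≠ 1 := by
              refine hη.pow_ne_one_of_pos_of_lt (pow_ne_zero _ (by norm_num)) ?_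
              rw [pow_succ]
              have := Nat.pow_pos (n := e') (show 0 < 2 by norm_num)
              omega
            have h0 : (η ^ (2 ^ e') - 1) * (η ^ (2 ^ e') + 1) = 0 := by
              linear_combination hsq
            rcases mul_eq_zero.mp h0 with h' | h'
            · exact absurd (by linear_combination h') hne
            · linear_combination h'
          have hneg3 : (η ^ 3) ^ (2 ^ e') = -1 := by
            rw [← pow_mul, mul_comm, pow_mul, hneg]
            norm_num
          rw [vpow2 v hv e' η hneg, vpow2 v hv e' (η ^ 3) hneg3]
        · have hv1 : v (η - 1) = 0 := vprim_zero v hv η m hm hη hp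
          have hv3' : v (η ^ 3 - 1) = 0 := by
            by_cases h3m : 3 ∣ m
            · obtain ⟨m3, hm3⟩ := h3m
              have hm3pos : 0 < m3 := by omega
              have hprim3 : IsPrimitiveRoot (η ^ 3) m3 := hη.pow hm hm3
              have hp3 : ¬ ∃ e, m3 = 2 ^ e := by
                rintro ⟨e, rfl⟩
                rcases Nat.eq_zero_or_pos e with h0 | h0
                · rw [h0] at hm3; norm_num at hm3
                  exact h3 hm3
                · exact hnk ⟨e - 1, by rw [hm3, Nat.sub_add_cancel h0]⟩
              exact vprim_zero v hv (η ^ 3) m3 hm3pos hprim3 hp3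
            · have hcop : Nat.Coprime 3 m := (Nat.prime_three.coprime_iff_not_dvd).mpr h3m
              have hprim3 : IsPrimitiveRoot (η ^ 3) m := hη.pow_of_coprime 3 hcop
              exact vprim_zero v hv (η ^ 3) m hm hprim3 hp
          rw [hv1, hv3']
      have hfac : η ^ 3 - 1 = (η ^ 2 + η + 1) * (η - 1) := by ring
      rw [hfac, v.map_mul] at claim
      have hnetop : v (η - 1) ≠ ⊤ := v.ne_top_iff.mpr (sub_ne_zero.mpr hη1)
      have h0 : v (η ^ 2 + η + 1) = 0 := canceleq hnetop claim
      rw [valph, h0]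
      norm_cast
end

section
/- There exist p, q ∈ ℕ with 1 ≤ p, q ≤ n such that (1 + 2cos(pπ/(n+1)))·(1 + 2cos(qπ/(n+1))) = 2 if and only if 6 divides n + 1. -/
open Polynomial Real


lemma conj_lemma (m p q : ℕ) (hm : 2 ≤ m) (hp : p ≤ 2*m) (hq : q ≤ 2*m)
    (h : (1 + 2*Real.cos (p*π/m)) * (1 + 2*Real.cos (q*π/m)) = 2)
    (k : ℕ) (hk : Nat.Coprime k (2*m)) :
    (1 + 2*Real.cos ((k*p)*π/m)) * (1 + 2*Real.cos ((k*q)*π/m)) = 2 := by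
  have hm0 : (m:ℝ) ≠ 0 := by positivity
  set N := 2*m with hN
  have hN0 : N ≠ 0 := by omega
  haveI : Fact (Irreducible (cyclotomic N ℚ)) := ⟨cyclotomic.irreducible_rat (by omega)⟩
  have hNr : (N:ℝ) = 2*m := by push_cast [hN]; ring
  have hroot : ∀ k : ℕ, Nat.Coprime k N →
      eval₂ (algebraMap ℚ ℂ) (Complex.exp (2*(π:ℂ)*Complex.I*(k/N))) (cyclotomic N ℚ) = 0 := by
    intro k hk
    have hprim := Complex.isPrimitiveRoot_exp_of_coprime k N hN0 hk
    have := hprim.isRoot_cyclotomic (Nat.pos_of_ne_zero hN0)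
    rw [eval₂_eq_eval_map, map_cyclotomic]
    exact this
  have hφa : ∀ (k : ℕ) (hk : Nat.Coprime k N), ∀ r : ℕ, r ≤ N →
      (AdjoinRoot.lift (algebraMap ℚ ℂ) _ (hroot k hk))
        (1 + (AdjoinRoot.root (cyclotomic N ℚ))^r + (AdjoinRoot.root (cyclotomic N ℚ))^(N-r))
      = ((1 + 2*Real.cos ((k*r)*π/m) : ℝ) : ℂ) := by
    intro k hk r hr
    have hexp : ∀ s : ℕ, Complex.exp (2*(π:ℂ)*Complex.I*(k/N)) ^ s
        = Complex.exp ((2*π*k*s/N : ℝ) * Complex.I) := by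
      intro s
      rw [← Complex.exp_nat_mul]
      congr 1
      push_cast
      have : (N:ℂ) ≠ 0 := by exact_mod_cast (Nat.cast_ne_zero (R := ℝ)).2 hN0
      field_simp
    simp only [map_add, map_pow, map_one, AdjoinRoot.lift_root, hexp]
    have hθ : (2*π*k*r/N : ℝ) = (k*r)*π/m := by rw [hNr]; field_simp
    have hNr' : ((N - r : ℕ) : ℝ) = (N:ℝ) - r := by push_cast [hr]; ring
    have h2 : (2*π*k*(N-r:ℕ)/N : ℝ) = 2*π*k + -((k*r)*π/m) := by
      rw [hNr', hNr]; field_simp; ring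
    have hone : Complex.exp (((2*π*k : ℝ):ℂ) * Complex.I) = 1 := by
      have := Complex.exp_int_mul_two_pi_mul_I k
      rw [← this]; congr 1; push_cast; ring
    rw [hθ, h2, Complex.ofReal_add, add_mul, Complex.exp_add, hone, one_mul,
      Complex.ofReal_neg, Complex.ofReal_add, Complex.ofReal_mul, Complex.ofReal_cos,
      Complex.cos]
    push_cast
    ring_nf
  set x := AdjoinRoot.root (cyclotomic N ℚ)
  have h1 : Nat.Coprime 1 N := Nat.coprime_one_left N
  have hK : (1 + x^p + x^(N-p)) * (1 + x^q + x^(N-q)) = 2 := by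
    apply (AdjoinRoot.lift (algebraMap ℚ ℂ) _ (hroot 1 h1)).injective
    rw [map_mul, hφa 1 h1 p hp, hφa 1 h1 q hq, map_ofNat]
    simp only [Nat.cast_one, one_mul]
    rw [← Complex.ofReal_mul, h]
    norm_num
  have hc := congrArg (AdjoinRoot.lift (algebraMap ℚ ℂ) _ (hroot k hk)) hK
  rw [map_mul, hφa k hk p hp, hφa k hk q hq, map_ofNat, ← Complex.ofReal_mul] at hc
  exact_mod_cast hc


lemma bad_d (d : ℕ) (hd : 3 ≤ d) (hd4 : d ≠ 4) (hd6 : d ≠ 6) :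
    ∃ j : ℕ, Nat.Coprime j d ∧ Real.cos (2*π*j/d) < -(1/6) := by
  have hπu : π < 3.15 := by linarith [pi_lt_d2]
  have hπl : 3.14 < π := by linarith [pi_gt_d6]
  have key : ∀ t : ℝ, 0 ≤ t → t ≤ 2*π/5 → Real.cos (π - t) < -(1/6) := by
    intro t h0 h5
    rw [Real.cos_pi_sub]
    have h1 : 1 - t^2/2 ≤ Real.cos t := one_sub_sq_div_two_le_cos
    have ht2 : t^2 ≤ (2*π/5)^2 := by nlinarith
    have hπ2 : π^2 < 9.9225 := by nlinarith
    nlinarith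
  rcases Nat.even_or_odd d with he | ho
  · obtain ⟨e, rfl⟩ := he
    have he2 : 2 ≤ e := by omega
    have he0 : (e:ℝ) ≠ 0 := by positivity
    rcases Nat.even_or_odd e with hee | heo
    · -- e even, so e ≥ 4
      obtain ⟨f, rfl⟩ := hee
      have hf : 2 ≤ f := by omega
      set e := f + f with hE
      refine ⟨e - 1, ?_, ?_⟩
      · set g := Nat.gcd (e-1) (e+e) with hG
        have h21 : g ∣ e - 1 := Nat.gcd_dvd_left _ _
        have h22 : g ∣ e + e := Nat.gcd_dvd_right _ _
        have hg2 : g ∣ 2 := by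
          have := Nat.dvd_sub h22 (h21.mul_left 2)
          rwa [show e + e - 2*(e-1) = 2 by omega] at this
        have hgle : g ≤ 2 := Nat.le_of_dvd (by norm_num) hg2
        have hne0 : g ≠ 0 := by
          intro h
          have := Nat.eq_zero_of_gcd_eq_zero_left (hG ▸ h)
          omega
        have hne2 : g ≠ 2 := by
          intro h
          rw [h] at h21
          omega
        have : g = 1 := by omega
        exact this
      · have hcast : ((e - 1 : ℕ):ℝ) = (e:ℝ) - 1 := by
          rw [Nat.cast_sub (by omega : 1 ≤ e)]; norm_num
        have hcast2 : ((e + e : ℕ):ℝ) = (e:ℝ) + e := by push_cast; ring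
        rw [hcast, hcast2]
        have hE0 : (4:ℝ) ≤ e := by exact_mod_cast (by omega : 4 ≤ e)
        rw [show 2*π*((e:ℝ)-1)/((e:ℝ)+e) = π - π/e by field_simp; ring]
        refine key _ (by positivity) ?_
        rw [div_le_div_iff₀ (by positivity) (by norm_num)]
        nlinarith
    · -- e odd; e = 3 gives d = 6 excluded, so e ≥ 5
      obtain ⟨f, rfl⟩ := heo
      have hf : 2 ≤ f := by omega
      set e := 2*f + 1 with hE
      refine ⟨e - 2, ?_, ?_⟩
      · set g := Nat.gcd (e-2) (e+e) with hG
        have h21 : g ∣ e - 2 := Nat.gcd_dvd_left _ _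
        have h22 : g ∣ e + e := Nat.gcd_dvd_right _ _
        have hg4 : g ∣ 4 := by
          have := Nat.dvd_sub h22 (h21.mul_left 2)
          rwa [show e + e - 2*(e-2) = 4 by omega] at this
        have hgle : g ≤ 4 := Nat.le_of_dvd (by norm_num) hg4
        have hne0 : g ≠ 0 := by
          intro h
          have := Nat.eq_zero_of_gcd_eq_zero_left (hG ▸ h)
          omega
        have hne3 : g ≠ 3 := by
          intro h; rw [h] at hg4; omega
        have hnoteven : ¬ (2 ∣ g) := by
          intro h2
          have := h2.trans h21
          omega
        omega
      · have hcast : ((e - 2 : ℕ):ℝ) = (e:ℝ) - 2 := by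
          rw [Nat.cast_sub (by omega : 2 ≤ e)]; norm_num
        have hcast2 : ((e + e : ℕ):ℝ) = (e:ℝ) + e := by push_cast; ring
        rw [hcast, hcast2]
        have hE0 : (5:ℝ) ≤ e := by exact_mod_cast (by omega : 5 ≤ e)
        have he0' : (e:ℝ) ≠ 0 := by positivity
        rw [show 2*π*((e:ℝ)-2)/((e:ℝ)+e) = π - 2*π/e by field_simp; ring]
        refine key _ (by positivity) ?_
        rw [div_le_div_iff₀ (by positivity) (by norm_num)]
        nlinarith
  · -- d odd, d = 2f+1, f ≥ 1, j = f
    obtain ⟨f, rfl⟩ := ho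
    have hf : 1 ≤ f := by omega
    set d := 2*f + 1 with hD
    refine ⟨f, ?_, ?_⟩
    · set g := Nat.gcd f d with hG
      have h21 : g ∣ f := Nat.gcd_dvd_left _ _
      have h22 : g ∣ d := Nat.gcd_dvd_right _ _
      have hg1 : g ∣ 1 := by
        have := Nat.dvd_sub h22 (h21.mul_left 2)
        rwa [show d - 2*f = 1 by omega] at this
      exact Nat.dvd_one.mp hg1
    · have hcast2 : ((2*f + 1 : ℕ):ℝ) = 2*(f:ℝ) + 1 := by push_cast; ring
      have hf1 : (1:ℝ) ≤ f := by exact_mod_cast hf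
      have hd0 : (2*(f:ℝ)+1) ≠ 0 := by positivity
      rw [hcast2, show 2*π*(f:ℝ)/(2*(f:ℝ)+1) = π - π/(2*(f:ℝ)+1) by field_simp; ring]
      refine key _ (by positivity) ?_
      rw [div_le_div_iff₀ (by positivity) (by norm_num)]
      nlinarith


lemma orbit (m p d : ℕ) (hm : 2 ≤ m) (hp1 : 1 ≤ p) (hpm : p < m)
    (hd : d = (2*m) / Nat.gcd p (2*m)) (j : ℕ) (hj : Nat.Coprime j d) :
    ∃ k : ℕ, Nat.Coprime k (2*m) ∧
      Real.cos ((k*p)*π/m) = Real.cos (2*π*j/(d:ℝ)) := by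
  set N := 2*m with hN
  set g := Nat.gcd p N with hG
  have hgN : g ∣ N := Nat.gcd_dvd_right _ _
  have hgp : g ∣ p := Nat.gcd_dvd_left _ _
  have hg0 : 0 < g := Nat.gcd_pos_of_pos_left _ (by omega)
  have hgd : g * d = N := by rw [hd]; exact Nat.mul_div_cancel' hgN
  have hd0 : 0 < d := by
    rcases Nat.eq_zero_or_pos d with h | h
    · rw [h, mul_zero] at hgd; omega
    · exact h
  set p' := p / g with hP
  have hgp' : g * p' = p := Nat.mul_div_cancel' hgp
  have hp'c : Nat.Coprime p' d := by rw [hd]; exact Nat.coprime_div_gcd_div_gcd hg0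
  have hdN : d ∣ N := ⟨g, by rw [← hgd]; ring⟩
  haveI : NeZero N := ⟨by omega⟩
  set u := ZMod.unitOfCoprime p' hp'c with hU
  set v := ZMod.unitOfCoprime j hj with hV
  obtain ⟨w, hw⟩ := ZMod.unitsMap_surjective hdN (v * u⁻¹)
  refine ⟨(w : ZMod N).val, ZMod.val_coe_unit_coprime w, ?_⟩
  set k := (w : ZMod N).val with hK
  have hzmod : ((k * p' : ℕ) : ZMod d) = ((j : ℕ) : ZMod d) := by
    have h1 : ((k : ℕ) : ZMod N) = (w : ZMod N) := by
      rw [hK, ZMod.natCast_val, ZMod.cast_id]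
    have h2 : ((k : ℕ) : ZMod d) = ZMod.castHom hdN (ZMod d) (w : ZMod N) := by
      rw [← h1, map_natCast]
    have h3 : (ZMod.castHom hdN (ZMod d) (w : ZMod N)) = ((ZMod.unitsMap hdN w : (ZMod d)ˣ) : ZMod d) := by
      rw [ZMod.unitsMap]; simp
    calc ((k * p' : ℕ) : ZMod d)
        = ((ZMod.unitsMap hdN w : (ZMod d)ˣ) : ZMod d) * ((u : (ZMod d)ˣ) : ZMod d) := by
          rw [Nat.cast_mul, h2, h3, hU, ZMod.coe_unitOfCoprime]
      _ = ((v : (ZMod d)ˣ) : ZMod d) := by rw [hw, ← Units.val_mul, inv_mul_cancel_right]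
      _ = ((j : ℕ) : ZMod d) := by rw [hV, ZMod.coe_unitOfCoprime]
  have hmod : k * p' ≡ j [MOD d] := (ZMod.natCast_eq_natCast_iff _ _ _).mp hzmod
  have hmodN : k * p ≡ g * j [MOD N] := by
    have h' := hmod.mul_left' (c := g)
    rw [hgd] at h'
    calc k * p = g * (k * p') := by rw [← hgp']; ring
    _ ≡ g * j [MOD N] := h'
  obtain ⟨t, ht⟩ := (Nat.modEq_iff_dvd).mp hmodN
  have hm0' : (m:ℝ) ≠ 0 := by positivity
  have hd0' : (d:ℝ) ≠ 0 := by positivity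
  have hgd' : (g:ℝ) * d = 2*m := by exact_mod_cast hgd
  have htR : (g:ℝ)*j - (k:ℝ)*p = (N:ℝ)*(t:ℝ) := by exact_mod_cast ht
  have hNR : (N:ℝ) = 2*m := by rw [hN]; push_cast; ring
  have hk' : (k:ℝ)*p = (g:ℝ)*j - 2*m*t := by rw [hNR] at htR; linarith
  have e1 : ((k:ℝ)*p)*π/m = (g:ℝ)*j*π/m + ((-t : ℤ):ℝ) * (2*π) := by
    push_cast
    field_simp
    linear_combination hk'
  have e2 : (g:ℝ)*j*π/m = 2*π*j/(d:ℝ) := by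
    rw [div_eq_div_iff hm0' hd0']
    linear_combination ((j:ℝ)*π) * hgd'
  rw [e1, Real.cos_add_int_mul_two_pi, e2]


lemma cos_lb (c d : ℝ) (hc : -1 ≤ c) (hc1 : c ≤ 1) (hd : -1 ≤ d) (hd1 : d ≤ 1)
    (h : (1+2*c)*(1+2*d) = 2) : -(1/6) ≤ c := by
  by_contra hlt
  push_neg at hlt
  rcases le_or_gt (1+2*c) 0 with h1 | h1
  · rcases le_or_gt (1+2*d) 0 with h2 | h2
    · nlinarith
    · nlinarith
  · nlinarith

lemma val46 (m r d : ℕ) (hm : 2 ≤ m) (hr1 : 1 ≤ r) (hrm : r < m)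
    (hd : d = 2*m/Nat.gcd r (2*m)) (h46 : d = 4 ∨ d = 6) : d * r = 2 * m := by
  set g := Nat.gcd r (2*m) with hG
  have hgr : g ∣ r := Nat.gcd_dvd_left _ _
  have hg0 : 0 < g := Nat.gcd_pos_of_pos_left _ (by omega)
  have hgd : g * d = 2*m := by rw [hd]; exact Nat.mul_div_cancel' (Nat.gcd_dvd_right _ _)
  set r' := r / g with hR
  have hgr' : g * r' = r := Nat.mul_div_cancel' hgr
  have hr'c : Nat.Coprime r' d := by rw [hd]; exact Nat.coprime_div_gcd_div_gcd hg0
  have h2r' : 2 * r' < d := by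
    by_contra hcon
    push_neg at hcon
    have : g * d ≤ g * (2 * r') := Nat.mul_le_mul_left _ hcon
    rw [hgd, show g * (2*r') = 2 * (g * r') by ring, hgr'] at this
    omega
  have hr'1 : 1 ≤ r' := by
    rcases Nat.eq_zero_or_pos r' with h | h
    · rw [h, mul_zero] at hgr'; omega
    · exact h
  have hr'eq : r' = 1 := by
    rcases h46 with rfl | rfl
    · omega
    · -- d = 6 : r' ∈ {1,2}, exclude 2 by coprimality
      rcases (by omega : r' = 1 ∨ r' = 2) with h | h
      · exact h
      · rw [h] at hr'c
        exact absurd hr'c (by decide)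
  have : r = g := by rw [← hgr', hr'eq, mul_one]
  rw [this, mul_comm, hgd]

theorem stmt_8 (n : ℕ) (hn : 1 ≤ n) :
    (∃ p q : ℕ, 1 ≤ p ∧ p ≤ n ∧ 1 ≤ q ∧ q ≤ n ∧
      (1 + 2 * Real.cos (p * π / (n + 1))) * (1 + 2 * Real.cos (q * π / (n + 1))) = 2)
    ↔ 6 ∣ (n + 1) := by
  have hm : 2 ≤ n + 1 := by omega
  have hmr : ((n:ℝ) + 1) = ((n+1 : ℕ):ℝ) := by push_cast; ring
  constructor
  · rintro ⟨p, q, hp1, hpn, hq1, hqn, h⟩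
    rw [hmr] at h
    set m := n + 1 with hM
    -- main claim : the "denominator" of each of p, q is 4 or 6
    have main : ∀ r s : ℕ, 1 ≤ r → r ≤ n → 1 ≤ s → s ≤ n →
        (1 + 2*Real.cos (r*π/(m:ℝ)))*(1 + 2*Real.cos (s*π/(m:ℝ))) = 2 →
        (2*m)/Nat.gcd r (2*m) = 4 ∨ (2*m)/Nat.gcd r (2*m) = 6 := by
      intro r s hr1 hrn hs1 hsn hrs
      set dr := (2*m)/Nat.gcd r (2*m) with hdr
      by_contra hno
      push_neg at hno
      have hgle : Nat.gcd r (2*m) ≤ r := Nat.le_of_dvd (by omega) (Nat.gcd_dvd_left _ _)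
      have hdr3 : 3 ≤ dr := by
        by_contra h'
        push_neg at h'
        have h2 : 2*m ≤ Nat.gcd r (2*m) * 2 := by
          conv_lhs => rw [← Nat.mul_div_cancel' (Nat.gcd_dvd_right r (2*m))]
          exact Nat.mul_le_mul_left _ (by omega)
        omega
      obtain ⟨j, hjc, hjlt⟩ := bad_d dr hdr3 hno.1 hno.2
      obtain ⟨k, hkc, hkcos⟩ := orbit m r dr (by omega) hr1 (by omega) hdr j hjc
      have hconj := conj_lemma m r s (by omega) (by omega) (by omega) hrs k hkc
      have hb := cos_lb _ _ (Real.neg_one_le_cos _) (Real.cos_le_one _)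
        (Real.neg_one_le_cos _) (Real.cos_le_one _) hconj
      rw [hkcos] at hb
      linarith
    have hp46 := main p q hp1 hpn hq1 hqn h
    have hq46 := main q p hq1 hqn hp1 hpn (by rw [mul_comm]; exact h)
    have hpv := val46 m p _ hm hp1 (by omega) rfl hp46
    have hqv := val46 m q _ hm hq1 (by omega) rfl hq46
    -- compute cosines in each case
    have cos4 : ∀ r : ℕ, 1 ≤ r → 2*m = 4*r → Real.cos (r*π/(m:ℝ)) = 0 := by
      intro r hr hmr2
      have : (m:ℝ) = 2*r := by exact_mod_cast (by omega : m = 2*r)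
      rw [this, show (r:ℝ)*π/(2*(r:ℝ)) = π/2 by
        have : (r:ℝ) ≠ 0 := by positivity
        field_simp]
      exact Real.cos_pi_div_two
    have cos6 : ∀ r : ℕ, 1 ≤ r → 2*m = 6*r → Real.cos (r*π/(m:ℝ)) = 1/2 := by
      intro r hr hmr2
      have : (m:ℝ) = 3*r := by exact_mod_cast (by omega : m = 3*r)
      rw [this, show (r:ℝ)*π/(3*(r:ℝ)) = π/3 by
        have : (r:ℝ) ≠ 0 := by positivity
        field_simp]
      exact Real.cos_pi_div_three
    rcases hp46 with h4 | h6 <;> rcases hq46 with k4 | k6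
    · rw [h4] at hpv; rw [k4] at hqv
      rw [cos4 p hp1 (by omega), cos4 q hq1 (by omega)] at h
      norm_num at h
    · rw [h4] at hpv; rw [k6] at hqv
      omega
    · rw [h6] at hpv; rw [k4] at hqv
      omega
    · rw [h6] at hpv; rw [k6] at hqv
      rw [cos6 p hp1 (by omega), cos6 q hq1 (by omega)] at h
      norm_num at h
  · rintro ⟨s, hs⟩
    have hs1 : 1 ≤ s := by omega
    refine ⟨2*s, 3*s, by omega, by omega, by omega, by omega, ?_⟩
    have hsr : (s:ℝ) ≠ 0 := by positivity
    have hnm : ((n:ℝ)+1) = 6*(s:ℝ) := by rw [hmr]; exact_mod_cast congrArg (Nat.cast (R := ℝ)) hs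
    rw [hnm]
    rw [show ((2*s : ℕ):ℝ)*π/(6*(s:ℝ)) = π/3 by push_cast; field_simp; ring]
    rw [show ((3*s : ℕ):ℝ)*π/(6*(s:ℝ)) = π/2 by push_cast; field_simp; ring]
    rw [Real.cos_pi_div_three, Real.cos_pi_div_two]
    norm_num
end

section
/- For m, n ≥ 1, there exist p, q ∈ ℕ with 1 ≤ p ≤ m, 1 ≤ q ≤ n and (1 + 2cos(pπ/(m+1)))·(1 + 2cos(qπ/(n+1))) = 2 if and only if (2 ∣ m+1 and 3 ∣ n+1) or (3 ∣ m+1 and 2 ∣ n+1). -/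
open Real Polynomial

lemma conj_step (T : ℕ) (hT : 0 < T) (a b k : ℕ) (hk : Nat.Coprime k T)
    (ζ : ℂ) (hζ : IsPrimitiveRoot ζ T)
    (h : (ζ^(2*a) + ζ^a + 1) * (ζ^(2*b) + ζ^b + 1) = 2 * ζ^(a+b)) :
    (ζ^(k*(2*a)) + ζ^(k*a) + 1) * (ζ^(k*(2*b)) + ζ^(k*b) + 1) = 2 * ζ^(k*(a+b)) := by
  set Q : ℚ[X] := (X^(2*a) + X^a + 1) * (X^(2*b) + X^b + 1) - 2 * X^(a+b) with hQ
  have hQζ : aeval ζ Q = 0 := by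
    simp only [hQ, map_sub, map_mul, map_add, map_pow, aeval_X, map_one, map_ofNat]
    rw [h]; ring
  have hmin : minpoly ℚ ζ ∣ Q := minpoly.dvd ℚ ζ hQζ
  rw [← Polynomial.cyclotomic_eq_minpoly_rat hζ hT] at hmin
  obtain ⟨R, hR⟩ := hmin
  have hζk : IsPrimitiveRoot (ζ^k) T := hζ.pow_of_coprime k hk
  have hroot : aeval (ζ^k) (cyclotomic T ℚ) = 0 := by
    have h2 := hζk.isRoot_cyclotomic hT
    rw [Polynomial.IsRoot] at h2
    rw [Polynomial.aeval_def, ← Polynomial.eval_map, Polynomial.map_cyclotomic]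
    exact h2
  have hz : aeval (ζ^k) Q = 0 := by rw [hR, map_mul, hroot, zero_mul]
  simp only [hQ, map_sub, map_mul, map_add, map_pow, aeval_X, map_one, map_ofNat] at hz
  simp only [← pow_mul] at hz
  linear_combination hz

lemma fact1 (θ : ℝ) : Complex.exp (θ*Complex.I)^2 + Complex.exp (θ*Complex.I) + 1
    = Complex.exp (θ*Complex.I) * (((1 + 2*(Real.cos θ)) : ℝ) : ℂ) := by
  have h : Complex.exp (θ*Complex.I) * Complex.exp (-θ*Complex.I) = 1 := by
    rw [← Complex.exp_add]; ring_nf; exact Complex.exp_zero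
  have hc : Complex.exp (θ*Complex.I) + Complex.exp (-θ*Complex.I)
      = 2 * (Real.cos θ : ℂ) := by
    rw [show (-θ : ℂ) = ((-θ : ℝ) : ℂ) by push_cast; ring] at *
    rw [Complex.exp_mul_I, Complex.exp_mul_I]
    rw [← Complex.ofReal_cos, ← Complex.ofReal_sin, ← Complex.ofReal_cos, ← Complex.ofReal_sin]
    rw [Real.cos_neg, Real.sin_neg]
    push_cast; ring
  push_cast
  simp only [Complex.ofReal_cos] at hc ⊢
  linear_combination Complex.exp (θ*Complex.I) * hc - h

lemma bnd (x y : ℝ) (h : (1+2*x)*(1+2*y) = 2) (hx1 : -1 ≤ x) (hx2 : x ≤ 1)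
    (hy1 : -1 ≤ y) (hy2 : y ≤ 1) : -1/6 ≤ x := by
  nlinarith [sq_nonneg (x-y), sq_nonneg (x+y),
    mul_nonneg (by linarith : (0:ℝ) ≤ 1+x) (by linarith : (0:ℝ) ≤ 1+y),
    mul_nonneg (by linarith : (0:ℝ) ≤ 1-x) (by linarith : (0:ℝ) ≤ 1-y)]


lemma lift_unit (s T : ℕ) (hT : 0 < T) (hsT : s ∣ T)
    (r u : ℕ) (hr : Nat.Coprime r s) (hu : Nat.Coprime u s) :
    ∃ k : ℕ, Nat.Coprime k T ∧ (k * r) % s = u % s := by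
  haveI : NeZero T := ⟨hT.ne'⟩
  set ru : (ZMod s)ˣ := ZMod.unitOfCoprime r hr with hru
  set uu : (ZMod s)ˣ := ZMod.unitOfCoprime u hu with huu
  obtain ⟨w, hw⟩ := ZMod.unitsMap_surjective hsT (uu * ru⁻¹)
  refine ⟨(w : ZMod T).val, ZMod.val_coe_unit_coprime w, ?_⟩
  rw [← Nat.ModEq, ← ZMod.natCast_eq_natCast_iff]
  push_cast
  have h1 : (((w : ZMod T).val : ℕ) : ZMod s) = ((uu * ru⁻¹ : (ZMod s)ˣ) : ZMod s) := by
    rw [← hw, ZMod.unitsMap_def, Units.coe_map]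
    simp only [MonoidHom.coe_coe, ZMod.castHom_apply]
    rw [ZMod.natCast_val]
  rw [h1]
  have h2 : ((r : ℕ) : ZMod s) = (ru : ZMod s) := by simp [hru]
  rw [h2]
  push_cast
  rw [mul_assoc]
  simp [huu]

lemma key_nt (N p : ℕ) (hN : 2 ≤ N) (hp1 : 1 ≤ p) (hp2 : p < N)
    (T : ℕ) (hT : 0 < T) (hNd : (2*N) ∣ T)
    (H : ∀ k : ℕ, Nat.Coprime k T → -1/6 ≤ Real.cos (2*π*((k*p : ℕ)) / ((2*N : ℕ)))) :
    N = 2*p ∨ N = 3*p := by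
  set g := Nat.gcd p (2*N) with hgdef
  have hg : 0 < g := Nat.gcd_pos_of_pos_left _ (by omega)
  set r := p / g with hrdef
  set s := (2*N) / g with hsdef
  have hpr : p = g * r := (Nat.mul_div_cancel' (Nat.gcd_dvd_left p (2*N))).symm
  have hsr : 2*N = g * s := (Nat.mul_div_cancel' (Nat.gcd_dvd_right p (2*N))).symm
  have hrs : Nat.Coprime r s := Nat.coprime_div_gcd_div_gcd hg
  have hr1 : 1 ≤ r := by
    rcases Nat.eq_zero_or_pos r with h | h
    · rw [h, mul_zero] at hpr; omega
    · exact h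
  have h2rs : 2*r < s := by
    have h1 : 2*p < 2*N := by omega
    rw [hpr, hsr] at h1
    have h2 := Nat.lt_of_mul_lt_mul_left (a := g) (by linarith [h1] : g * (2*r) < g * s)
    omega
  have hs3 : 3 ≤ s := by omega
  have hs0 : (s:ℝ) ≠ 0 := by positivity
  have hsdT : s ∣ T := dvd_trans ⟨g, by rw [hsr]; ring⟩ hNd
  have H' : ∀ u : ℕ, Nat.Coprime u s → -1/6 ≤ Real.cos (2*π*u/s) := by
    intro u hu
    obtain ⟨k, hk, hmod⟩ := lift_unit s T hT hsdT r u hrs hu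
    have hH := H k hk
    have e1 : 2*π*((k*p : ℕ) : ℝ) / ((2*N : ℕ) : ℝ) = 2*π*((k*r : ℕ) : ℝ) / (s : ℝ) := by
      rw [hpr, hsr]
      have hg0 : (g:ℝ) ≠ 0 := by positivity
      push_cast
      field_simp
    obtain ⟨j, hj⟩ : (s:ℤ) ∣ ((u : ℤ) - ((k*r : ℕ) : ℤ)) := Nat.ModEq.dvd hmod
    have hu' : (u:ℝ) = ((k*r:ℕ):ℝ) + (s:ℝ)*(j:ℝ) := by
      have h3 : ((u:ℤ) - ((k*r:ℕ):ℤ) : ℤ) = (s:ℤ)*j := hj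
      have h4 : ((u:ℝ) - ((k*r:ℕ):ℝ)) = (s:ℝ)*(j:ℝ) := by exact_mod_cast h3
      linarith
    have e3 : Real.cos (2*π*(u:ℝ)/s) = Real.cos (2*π*((k*r:ℕ):ℝ)/(s:ℝ)) := by
      have e4 : 2*π*(u:ℝ)/s = 2*π*((k*r:ℕ):ℝ)/(s:ℝ) + (j:ℝ)*(2*π) := by
        rw [hu']
        field_simp
      rw [e4, Real.cos_add_int_mul_two_pi]
    rw [e3, ← e1]
    exact hH
  -- case analysis on s
  rcases Nat.even_or_odd s with hse | hso
  · obtain ⟨t, ht⟩ := hse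
    have hts : s = 2*t := by omega
    have ht2 : 2 ≤ t := by omega
    rcases Nat.even_or_odd t with hte | hto
    · by_cases h4 : s = 4
      · left
        have hr : r = 1 := by omega
        rw [h4] at hsr
        rw [hr] at hpr
        omega
      · exfalso
        have ht4 : 4 ≤ t := by
          obtain ⟨e, he⟩ := hte
          omega
        have hcop : Nat.Coprime (t+1) s := by
          rw [hts, Nat.coprime_mul_iff_right]
          exact ⟨Nat.coprime_two_right.mpr (Even.add_one hte),
            by simp [Nat.coprime_add_self_left]⟩
        have hH := H' (t+1) hcop
        have e5 : 2*π*((t+1 : ℕ):ℝ)/(s:ℝ) = π/(t:ℝ) + π := by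
          rw [hts]
          have ht0 : ((t:ℝ)) ≠ 0 := by positivity
          push_cast
          field_simp
          ring
        rw [e5, Real.cos_add_pi] at hH
        have hle : π/(t:ℝ) ≤ π/4 :=
          div_le_div_of_nonneg_left pi_pos.le (by norm_num) (by exact_mod_cast ht4)
        have hc : Real.cos (π/4) ≤ Real.cos (π/(t:ℝ)) :=
          Real.cos_le_cos_of_nonneg_of_le_pi (by positivity)
            (by linarith [pi_pos]) hle
        rw [Real.cos_pi_div_four] at hc
        have h2 : (1:ℝ) ≤ Real.sqrt 2 := by
          nlinarith [Real.sq_sqrt (by norm_num : (0:ℝ) ≤ 2), Real.sqrt_nonneg 2]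
        linarith
    · by_cases h6 : s = 6
      · right
        have hr : r = 1 ∨ r = 2 := by omega
        rcases hr with hr | hr
        · rw [h6] at hsr
          rw [hr] at hpr
          omega
        · exfalso
          rw [hr, h6] at hrs
          norm_num [Nat.Coprime] at hrs
      · exfalso
        have ht5 : 5 ≤ t := by
          obtain ⟨e, he⟩ := hto
          omega
        have hcop : Nat.Coprime (t+2) s := by
          rw [hts, Nat.coprime_mul_iff_right]
          constructor
          · rw [Nat.coprime_two_right]
            obtain ⟨e, he⟩ := hto
            exact ⟨e+1, by omega⟩
          · rw [add_comm, Nat.coprime_add_self_left]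
            exact Nat.coprime_two_left.mpr hto
        have hH := H' (t+2) hcop
        have e5 : 2*π*((t+2 : ℕ):ℝ)/(s:ℝ) = 2*π/(t:ℝ) + π := by
          rw [hts]
          have ht0 : ((t:ℝ)) ≠ 0 := by positivity
          push_cast
          field_simp
          ring
        rw [e5, Real.cos_add_pi] at hH
        have hle : 2*π/(t:ℝ) ≤ 2*π/5 :=
          div_le_div_of_nonneg_left (by positivity) (by norm_num) (by exact_mod_cast ht5)
        have hc : Real.cos (2*π/5) ≤ Real.cos (2*π/(t:ℝ)) :=
          Real.cos_le_cos_of_nonneg_of_le_pi (by positivity)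
            (by linarith [pi_pos]) hle
        have h25 : Real.cos (2*π/5) = (Real.sqrt 5 - 1)/4 := by
          rw [show 2*π/5 = 2*(π/5) by ring, Real.cos_two_mul, Real.cos_pi_div_five]
          have h5 : Real.sqrt 5 ^ 2 = 5 := Real.sq_sqrt (by norm_num)
          linear_combination h5/8
        have hgt : (1:ℝ)/6 < (Real.sqrt 5 - 1)/4 := by
          have : (5:ℝ)/3 < Real.sqrt 5 := (Real.lt_sqrt (by norm_num)).mpr (by norm_num)
          linarith
        rw [h25] at hc
        linarith
  · exfalso
    obtain ⟨t, ht⟩ := hso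
    have ht1 : 1 ≤ t := by omega
    have hcop : Nat.Coprime t s := by
      rw [ht]
      simp [Nat.coprime_mul_right_add_right]
    have hH := H' t hcop
    have e5 : 2*π*((t : ℕ):ℝ)/(s:ℝ) = π - π/(s:ℝ) := by
      have hst : (s:ℝ) = 2*(t:ℝ)+1 := by exact_mod_cast ht
      rw [hst] at hs0 ⊢
      field_simp
      ring
    rw [e5, Real.cos_pi_sub] at hH
    have hle : π/(s:ℝ) ≤ π/3 :=
      div_le_div_of_nonneg_left pi_pos.le (by norm_num) (by exact_mod_cast hs3)
    have hc : Real.cos (π/3) ≤ Real.cos (π/(s:ℝ)) :=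
      Real.cos_le_cos_of_nonneg_of_le_pi (by positivity)
        (by linarith [pi_pos]) hle
    rw [Real.cos_pi_div_three] at hc
    linarith

theorem forward_main (N M p q : ℕ) (hN2 : 2 ≤ N) (hM2 : 2 ≤ M)
    (hp1 : 1 ≤ p) (hp2 : p < N) (hq1 : 1 ≤ q) (hq2 : q < M)
    (heq : (1 + 2 * Real.cos ((p:ℝ) * π / (N:ℝ))) * (1 + 2 * Real.cos ((q:ℝ) * π / (M:ℝ))) = 2)
    (keynt : ∀ (N' p' : ℕ), 2 ≤ N' → 1 ≤ p' → p' < N' →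
      ∀ (T' : ℕ), 0 < T' → (2*N') ∣ T' →
      (∀ k : ℕ, Nat.Coprime k T' → -1/6 ≤ Real.cos (2*π*((k*p' : ℕ)) / ((2*N' : ℕ)))) →
      N' = 2*p' ∨ N' = 3*p') :
    (N = 2*p ∨ N = 3*p) ∧ (M = 2*q ∨ M = 3*q) := by
  obtain ⟨T, hTdef⟩ : ∃ T, T = 2*N*M := ⟨_, rfl⟩
  obtain ⟨a, hadef⟩ : ∃ a, a = p*M := ⟨_, rfl⟩
  obtain ⟨b, hbdef⟩ : ∃ b, b = q*N := ⟨_, rfl⟩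
  have hT : 0 < T := by subst hTdef; positivity
  have hN0 : ((N:ℕ):ℝ) ≠ 0 := by positivity
  have hM0 : ((M:ℕ):ℝ) ≠ 0 := by positivity
  have hTR : ((T:ℕ):ℝ) ≠ 0 := by positivity
  obtain ⟨ζ, hζdef⟩ : ∃ ζ : ℂ, ζ = Complex.exp (2 * (π:ℝ) * Complex.I / (T:ℕ)) := ⟨_, rfl⟩
  have hζ : IsPrimitiveRoot ζ T := hζdef ▸ Complex.isPrimitiveRoot_exp T hT.ne'
  have pow_form : ∀ j : ℕ, ζ^j = Complex.exp (((2*π*j/T : ℝ) : ℂ) * Complex.I) := by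
    intro j
    rw [hζdef, ← Complex.exp_nat_mul]
    congr 1
    have hTC : ((T:ℕ):ℂ) ≠ 0 := by exact_mod_cast hTR
    push_cast
    field_simp
    try ring
  have grp : ∀ j : ℕ, ζ^(2*j) + ζ^j + 1
      = ζ^j * (((1 + 2*Real.cos (2*π*j/T)) : ℝ) : ℂ) := by
    intro j
    rw [mul_comm 2 j, pow_mul, pow_form j]
    exact fact1 _
  have e_a : 2*π*((a:ℕ):ℝ)/((T:ℕ):ℝ) = (p:ℝ) * π / ((N:ℕ):ℝ) := by
    rw [hadef, hTdef]
    push_cast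
    field_simp
    try ring
  have e_b : 2*π*((b:ℕ):ℝ)/((T:ℕ):ℝ) = (q:ℝ) * π / ((M:ℕ):ℝ) := by
    rw [hbdef, hTdef]
    push_cast
    field_simp
    try ring
  have hC : (ζ^(2*a) + ζ^a + 1) * (ζ^(2*b) + ζ^b + 1) = 2 * ζ^(a+b) := by
    rw [grp a, grp b, pow_add, e_a, e_b]
    have heqC : (((1 + 2*Real.cos ((p:ℝ) * π / ((N:ℕ):ℝ))) : ℝ) : ℂ)
        * (((1 + 2*Real.cos ((q:ℝ) * π / ((M:ℕ):ℝ))) : ℝ) : ℂ) = 2 := by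
      exact_mod_cast heq
    linear_combination (ζ^a * ζ^b) * heqC
  have main : ∀ k : ℕ, Nat.Coprime k T →
      (1 + 2*Real.cos (2*π*((k*a : ℕ):ℝ)/((T:ℕ):ℝ)))
        * (1 + 2*Real.cos (2*π*((k*b : ℕ):ℝ)/((T:ℕ):ℝ))) = 2 := by
    intro k hk
    have h1 := conj_step T hT a b k hk ζ hζ hC
    rw [show k*(2*a) = 2*(k*a) by ring, show k*(2*b) = 2*(k*b) by ring,
      show k*(a+b) = (k*a) + (k*b) by ring] at h1
    rw [grp (k*a), grp (k*b), pow_add] at h1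
    have hz1 : ζ^(k*a) ≠ 0 := by
      rw [pow_form]; exact Complex.exp_ne_zero _
    have hz2 : ζ^(k*b) ≠ 0 := by
      rw [pow_form]; exact Complex.exp_ne_zero _
    have h2 : (((1 + 2*Real.cos (2*π*((k*a : ℕ):ℝ)/((T:ℕ):ℝ)))
        * (1 + 2*Real.cos (2*π*((k*b : ℕ):ℝ)/((T:ℕ):ℝ))) : ℝ) : ℂ) = 2 := by
      apply mul_left_cancel₀ (mul_ne_zero hz1 hz2)
      push_cast
      push_cast at h1
      linear_combination h1
    exact_mod_cast h2
  have H_m : ∀ k : ℕ, Nat.Coprime k T →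
      -1/6 ≤ Real.cos (2*π*((k*p : ℕ):ℝ) / ((2*N : ℕ):ℝ)) := by
    intro k hk
    have h := main k hk
    have e : 2*π*((k*a : ℕ):ℝ)/((T:ℕ):ℝ) = 2*π*((k*p : ℕ):ℝ)/((2*N : ℕ):ℝ) := by
      rw [hadef, hTdef]
      push_cast
      field_simp
      try ring
    rw [e] at h
    exact bnd _ _ h (Real.neg_one_le_cos _) (Real.cos_le_one _)
      (Real.neg_one_le_cos _) (Real.cos_le_one _)
  have H_n : ∀ k : ℕ, Nat.Coprime k T →
      -1/6 ≤ Real.cos (2*π*((k*q : ℕ):ℝ) / ((2*M : ℕ):ℝ)) := by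
    intro k hk
    have h := main k hk
    have e : 2*π*((k*b : ℕ):ℝ)/((T:ℕ):ℝ) = 2*π*((k*q : ℕ):ℝ)/((2*M : ℕ):ℝ) := by
      rw [hbdef, hTdef]
      push_cast
      field_simp
      try ring
    rw [e, mul_comm] at h
    exact bnd _ _ h (Real.neg_one_le_cos _) (Real.cos_le_one _)
      (Real.neg_one_le_cos _) (Real.cos_le_one _)
  constructor
  · exact keynt N p hN2 hp1 hp2 T hT ⟨M, by rw [hTdef]; try ring⟩ H_m
  · exact keynt M q hM2 hq1 hq2 T hT ⟨N, by rw [hTdef]; try ring⟩ H_n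

lemma cosval2 (p K : ℕ) (hp : 1 ≤ p) (h : K = 2*p) :
    Real.cos ((p:ℝ)*π/(K:ℝ)) = 0 := by
  have hp0 : (p:ℝ) ≠ 0 := by
    have : (0:ℝ) < p := by exact_mod_cast hp
    linarith
  have e : (K:ℝ) = 2*p := by exact_mod_cast h
  rw [e, show (p:ℝ)*π/(2*(p:ℝ)) = π/2 from by field_simp]
  exact Real.cos_pi_div_two

lemma cosval3 (p K : ℕ) (hp : 1 ≤ p) (h : K = 3*p) :
    Real.cos ((p:ℝ)*π/(K:ℝ)) = 1/2 := by
  have hp0 : (p:ℝ) ≠ 0 := by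
    have : (0:ℝ) < p := by exact_mod_cast hp
    linarith
  have e : (K:ℝ) = 3*p := by exact_mod_cast h
  rw [e, show (p:ℝ)*π/(3*(p:ℝ)) = π/3 from by field_simp]
  exact Real.cos_pi_div_three

theorem stmt_9 (m n : ℕ) (hm : 1 ≤ m) (hn : 1 ≤ n) :
    (∃ p q : ℕ, 1 ≤ p ∧ p ≤ m ∧ 1 ≤ q ∧ q ≤ n ∧
      (1 + 2 * Real.cos (p * π / (m + 1))) * (1 + 2 * Real.cos (q * π / (n + 1))) = 2)
    ↔ ((2 ∣ (m + 1) ∧ 3 ∣ (n + 1)) ∨ (3 ∣ (m + 1) ∧ 2 ∣ (n + 1))) := by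
  have hm1 : ((m:ℝ)+1) = (((m+1 : ℕ)):ℝ) := by push_cast; ring
  have hn1 : ((n:ℝ)+1) = (((n+1 : ℕ)):ℝ) := by push_cast; ring
  constructor
  · rintro ⟨p, q, hp1, hp2, hq1, hq2, heq⟩
    rw [hm1, hn1] at heq
    have h := forward_main (m+1) (n+1) p q (by omega) (by omega) hp1 (by omega)
      hq1 (by omega) heq key_nt
    obtain ⟨hA, hB⟩ := h
    rcases hA with hA | hA <;> rcases hB with hB | hB
    · exfalso
      rw [cosval2 p (m+1) hp1 hA, cosval2 q (n+1) hq1 hB] at heq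
      norm_num at heq
    · exact Or.inl ⟨⟨p, hA⟩, ⟨q, hB⟩⟩
    · exact Or.inr ⟨⟨p, hA⟩, ⟨q, hB⟩⟩
    · exfalso
      rw [cosval3 p (m+1) hp1 hA, cosval3 q (n+1) hq1 hB] at heq
      norm_num at heq
  · rintro (⟨⟨c, hc⟩, ⟨d, hd⟩⟩ | ⟨⟨c, hc⟩, ⟨d, hd⟩⟩)
    · refine ⟨c, d, by omega, by omega, by omega, by omega, ?_⟩
      rw [hm1, hn1]
      rw [cosval2 c (m+1) (by omega) hc, cosval3 d (n+1) (by omega) hd]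
      norm_num
    · refine ⟨c, d, by omega, by omega, by omega, by omega, ?_⟩
      rw [hm1, hn1]
      rw [cosval3 c (m+1) (by omega) hc, cosval2 d (n+1) (by omega) hd]
      norm_num
end

section
/- For m, n ≥ 3, there exist p, q ∈ ℕ with 1 ≤ p ≤ m, 1 ≤ q ≤ n and (1 + 2cos(2pπ/m))·(1 + 2cos(2qπ/n)) = 2 if and only if (4 ∣ m and 6 ∣ n) or (6 ∣ m and 4 ∣ n). -/
open Real

section Aux
open Polynomial

lemma cexp_aux (L : ℕ) (hL : 0 < L) (t : ℕ) :
    (Complex.exp (2*π*Complex.I/L))^t + (Complex.exp (2*π*Complex.I/L))^(t*(L-1))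
      = ((2 * Real.cos (2*π*t/L) : ℝ) : ℂ) := by
  have hL0 : (L : ℂ) ≠ 0 := Nat.cast_ne_zero.mpr hL.ne'
  have h1 : (Complex.exp (2*π*Complex.I/L))^t = Complex.exp ((2*π*t/L) * Complex.I) := by
    rw [← Complex.exp_nat_mul]; ring_nf
  have h2 : (Complex.exp (2*π*Complex.I/L))^(t*(L-1)) = Complex.exp (-((2*π*t/L) * Complex.I)) := by
    rw [← Complex.exp_nat_mul]
    have : ((t*(L-1) : ℕ) : ℂ) * (2*π*Complex.I/L) = -((2*π*t/L) * Complex.I) + (t:ℕ) * (2*π*Complex.I) := by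
      have : ((L - 1 : ℕ) : ℂ) = (L : ℂ) - 1 := by
        push_cast [Nat.cast_sub hL]; ring
      push_cast [this]
      field_simp
      ring
    rw [this, Complex.exp_add]
    norm_num [Complex.exp_nat_mul_two_pi_mul_I]
  rw [h1, h2]
  have harg : (2*π*(t:ℂ)/(L:ℂ)) = ((2*π*t/L : ℝ) : ℂ) := by push_cast; ring
  rw [harg, show -(((2*π*t/L:ℝ):ℂ) * Complex.I) = ((-(2*π*t/L):ℝ):ℂ) * Complex.I by push_cast; ring]
  rw [Complex.exp_mul_I, Complex.exp_mul_I]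
  simp [← Complex.ofReal_cos, ← Complex.ofReal_sin, Real.cos_neg, Real.sin_neg]
  push_cast
  ring

lemma conj_eq (L : ℕ) (hL : 0 < L) (a b k : ℕ) (hk : Nat.Coprime k L)
    (h : (1 + 2 * Real.cos (2*π*a/L)) * (1 + 2 * Real.cos (2*π*b/L)) = 2) :
    (1 + 2 * Real.cos (2*π*(k*a)/L)) * (1 + 2 * Real.cos (2*π*(k*b)/L)) = 2 := by
  set ξ := Complex.exp (2*π*Complex.I/L) with hξ
  have hprim : IsPrimitiveRoot ξ L := Complex.isPrimitiveRoot_exp L hL.ne'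
  set P : ℚ[X] := (1 + X^a + X^(a*(L-1))) * (1 + X^b + X^(b*(L-1))) - C 2 with hP
  have evalP : ∀ z : ℂ, aeval z P =
      (1 + z^a + z^(a*(L-1))) * (1 + z^b + z^(b*(L-1))) - 2 := by
    intro z; simp [hP]
  have hroot : aeval ξ P = 0 := by
    rw [evalP]
    have ea : (1 : ℂ) + ξ^a + ξ^(a*(L-1)) = ((1 + 2*Real.cos (2*π*a/L) : ℝ) : ℂ) := by
      have := cexp_aux L hL a; push_cast; rw [← hξ] at this; rw [add_assoc, this]; push_cast; ring
    have eb : (1 : ℂ) + ξ^b + ξ^(b*(L-1)) = ((1 + 2*Real.cos (2*π*b/L) : ℝ) : ℂ) := by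
      have := cexp_aux L hL b; push_cast; rw [← hξ] at this; rw [add_assoc, this]; push_cast; ring
    rw [ea, eb, ← Complex.ofReal_mul, h]
    norm_num
  have hdvd : minpoly ℚ ξ ∣ P := minpoly.dvd ℚ ξ hroot
  rw [← cyclotomic_eq_minpoly_rat hprim hL] at hdvd
  have hprim' : IsPrimitiveRoot (ξ^k) L := hprim.pow_of_coprime k hk
  have hcyc : aeval (ξ^k) (cyclotomic L ℚ) = 0 := by
    have h0 : (cyclotomic L ℂ).IsRoot (ξ^k) := hprim'.isRoot_cyclotomic hL
    rw [aeval_def, ← eval_map, map_cyclotomic]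
    exact h0
  have hroot' : aeval (ξ^k) P = 0 := by
    obtain ⟨Q, hQ⟩ := hdvd
    rw [hQ, map_mul, hcyc, zero_mul]
  rw [evalP] at hroot'
  have ea : (1 : ℂ) + (ξ^k)^a + (ξ^k)^(a*(L-1)) = ((1 + 2*Real.cos (2*π*(k*a)/L) : ℝ) : ℂ) := by
    have := cexp_aux L hL (k*a); rw [← hξ] at this
    rw [← pow_mul, ← pow_mul, show k*(a*(L-1)) = (k*a)*(L-1) by ring, add_assoc, this]
    push_cast; ring
  have eb : (1 : ℂ) + (ξ^k)^b + (ξ^k)^(b*(L-1)) = ((1 + 2*Real.cos (2*π*(k*b)/L) : ℝ) : ℂ) := by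
    have := cexp_aux L hL (k*b); rw [← hξ] at this
    rw [← pow_mul, ← pow_mul, show k*(b*(L-1)) = (k*b)*(L-1) by ring, add_assoc, this]
    push_cast; ring
  rw [ea, eb, ← Complex.ofReal_mul, sub_eq_zero] at hroot'
  have : ((1 + 2*Real.cos (2*π*(k*a)/L)) * (1 + 2*Real.cos (2*π*(k*b)/L)) : ℝ) = ((2:ℝ)) := by
    exact_mod_cast hroot'
  exact this

lemma cos_two_pi_div_three : Real.cos (2*π/3) = -(1/2) := by
  rw [show (2*π/3 : ℝ) = π - π/3 by ring, Real.cos_pi_sub, Real.cos_pi_div_three]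

lemma cos_le_of_between (d j : ℕ) (hd : 0 < d) (h2 : 2*j ≤ d) (h3 : d ≤ 3*j) :
    Real.cos (2*π*j/d) ≤ -(1/2) := by
  have hd' : (0:ℝ) < d := by exact_mod_cast hd
  have hπ := Real.pi_pos
  have hx : (2*π/3 : ℝ) ≤ 2*π*j/d := by
    rw [div_le_div_iff₀ (by norm_num) hd']
    have : (d:ℝ) ≤ 3*j := by exact_mod_cast h3
    nlinarith
  have hy : (2*π*j/d : ℝ) ≤ π := by
    rw [div_le_iff₀ hd']
    have : (2*j:ℝ) ≤ d := by exact_mod_cast h2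
    nlinarith
  calc Real.cos (2*π*j/d) ≤ Real.cos (2*π/3) :=
        Real.cos_le_cos_of_nonneg_of_le_pi (by positivity) hy hx
    _ = -(1/2) := cos_two_pi_div_three

lemma cos_ten : Real.cos (2*π*3/10) < -(1/6) := by
  have h5 : Real.cos (π/5) = (1 + Real.sqrt 5)/4 := Real.cos_pi_div_five
  have h25 : Real.cos (2*(π/5)) = 2 * Real.cos (π/5)^2 - 1 := Real.cos_two_mul _
  have harg : (2*π*3/10 : ℝ) = π - 2*(π/5) := by ring
  rw [harg, Real.cos_pi_sub, h25, h5]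
  have hs : Real.sqrt 5 ^ 2 = 5 := Real.sq_sqrt (by norm_num)
  have hs2 : (5:ℝ)/3 < Real.sqrt 5 := by nlinarith [Real.sqrt_nonneg 5]
  nlinarith

lemma sieve (d : ℕ) (hd : 0 < d)
    (H : ∀ j, Nat.Coprime j d → -(1/6) ≤ Real.cos (2*π*j/d)) :
    d = 1 ∨ d = 4 ∨ d = 6 := by
  by_contra hcon
  push_neg at hcon
  obtain ⟨h1, h4, h6⟩ := hcon
  by_cases h10 : d = 10
  · subst h10
    have hH := H 3 (by norm_num)
    have := cos_ten
    norm_num at *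
    linarith
  have key : ∃ j, Nat.Coprime j d ∧ 2*j ≤ d ∧ d ≤ 3*j := by
    rcases Nat.even_or_odd d with he | ho
    · obtain ⟨u, hu⟩ := he
      rcases Nat.even_or_odd u with hue | huo
      · obtain ⟨s, hs⟩ := hue
        have hd4 : d = 4*s := by omega
        have hs2 : 2 ≤ s := by omega
        refine ⟨2*s - 1, ?_, by omega, by omega⟩
        have hodd : Odd (2*s-1) := by rw [Nat.odd_iff]; omega
        have hc2 : Nat.Coprime (2*s-1) 2 := hodd.coprime_two_right
        have hcs : Nat.Coprime (2*s-1) (2*s) := by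
          have h' := (Nat.coprime_add_mul_right_right (2*s-1) 1 1).mpr (Nat.coprime_one_right _)
          rwa [show 1 + 1*(2*s-1) = 2*s by omega] at h' 
        have : Nat.Coprime (2*s-1) (2*(2*s)) := Nat.Coprime.mul_right hc2 hcs
        rwa [show 2*(2*s) = d by omega] at this
      · have hu14 : 7 ≤ u ∨ u = 1 ∨ u = 3 ∨ u = 5 := by rw [Nat.odd_iff] at huo; omega
        rcases hu14 with h7 | h135
        · refine ⟨u - 2, ?_, by omega, by omega⟩
          have hodd : Odd (u-2) := by rw [Nat.odd_iff] at *; omega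
          have hc2 : Nat.Coprime (u-2) 2 := hodd.coprime_two_right
          have hcu : Nat.Coprime (u-2) u := by
            have h' := (Nat.coprime_add_mul_right_right (u-2) 2 1).mpr hc2
            rwa [show 2 + 1*(u-2) = u by omega] at h' 
          have : Nat.Coprime (u-2) (2*u) := Nat.Coprime.mul_right hc2 hcu
          rwa [show 2*u = d by omega] at this
        · have hd2 : d = 2 := by omega
          exact ⟨1, by simp, by omega, by omega⟩
    · have hd3 : 3 ≤ d := by rw [Nat.odd_iff] at ho; omega
      obtain ⟨t, ht⟩ := ho
      refine ⟨t, ?_, by omega, by omega⟩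
      have h' := (Nat.coprime_add_mul_right_right t 1 2).mpr (Nat.coprime_one_right _)
      rwa [show 1 + 2*t = d by omega] at h' 
  obtain ⟨j, hj, hj2, hj3⟩ := key
  have := H j hj
  have := cos_le_of_between d j hd hj2 hj3
  linarith

lemma lift_unit_s10 (d L r j : ℕ) (hdL : d ∣ L) (hL : 0 < L)
    (hr : Nat.Coprime r d) (hj : Nat.Coprime j d) :
    ∃ k, Nat.Coprime k L ∧ (k * r) % d = j % d := by
  haveI : NeZero L := ⟨hL.ne'⟩
  have hd0 : 0 < d := Nat.pos_of_dvd_of_pos hdL hL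
  haveI : NeZero d := ⟨hd0.ne'⟩
  set ur : (ZMod d)ˣ := ZMod.unitOfCoprime r hr
  set uj : (ZMod d)ˣ := ZMod.unitOfCoprime j hj
  obtain ⟨w, hw⟩ := ZMod.unitsMap_surjective hdL (uj * ur⁻¹)
  refine ⟨((w : (ZMod L)ˣ) : ZMod L).val, ZMod.val_coe_unit_coprime w, ?_⟩
  rw [← Nat.ModEq]
  rw [← ZMod.natCast_eq_natCast_iff]
  push_cast
  have hk : ((((w : (ZMod L)ˣ) : ZMod L).val : ℕ) : ZMod d) = ((uj * ur⁻¹ : (ZMod d)ˣ) : ZMod d) := by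
    rw [← hw]
    rw [ZMod.unitsMap_def]
    simp only [Units.coe_map, MonoidHom.coe_coe]
    rw [ZMod.natCast_val]
    rfl
  rw [hk]
  have : ((ur : ZMod d)) = (r : ZMod d) := rfl
  have huj : ((uj : ZMod d)) = (j : ZMod d) := rfl
  have hfin : ((uj * ur⁻¹ : (ZMod d)ˣ) : ZMod d) * ((r:ℕ) : ZMod d) = ((uj : ZMod d)) := by
    rw [← this, ← Units.val_mul]
    congr 1
    group
  rw [hfin, huj]

lemma cos_val (m p : ℕ) (hp : 0 < p) (hm : 0 < m)
    (hd : m / Nat.gcd p m = 1 ∨ m / Nat.gcd p m = 4 ∨ m / Nat.gcd p m = 6) :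
    Real.cos (2*p*π/m) = 1 ∨ (4 ∣ m ∧ Real.cos (2*p*π/m) = 0)
      ∨ (6 ∣ m ∧ Real.cos (2*p*π/m) = 1/2) := by
  set g := Nat.gcd p m with hgdef
  have hg : 0 < g := Nat.gcd_pos_of_pos_left m hp
  set r := p / g with hrdef
  set d := m / g with hddef
  have hrd : Nat.Coprime r d := Nat.coprime_div_gcd_div_gcd hg
  have hpg : r * g = p := Nat.div_mul_cancel (Nat.gcd_dvd_left p m)
  have hmg : d * g = m := Nat.div_mul_cancel (Nat.gcd_dvd_right p m)
  have hd0 : 0 < d := by rcases hd with h|h|h <;> omega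
  have harg : (2*(p:ℝ)*π/m) = 2*π*(r:ℝ)/d := by
    rw [← hpg, ← hmg]
    have hg0 : (g:ℝ) ≠ 0 := Nat.cast_ne_zero.mpr hg.ne'
    have hd0' : (d:ℝ) ≠ 0 := Nat.cast_ne_zero.mpr hd0.ne'
    push_cast
    field_simp
  rw [harg]
  rcases hd with h1 | h4 | h6
  · left
    rw [h1, show (2*π*(r:ℝ)/(1:ℕ)) = r*(2*π) by push_cast; ring]
    exact Real.cos_nat_mul_two_pi r
  · right; left
    constructor
    · exact ⟨g, by rw [← hmg, h4]⟩
    · rw [h4] at hrd ⊢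
      have hodd : r % 2 = 1 := by
        rcases Nat.even_or_odd r with he | ho
        · exfalso
          obtain ⟨t, ht⟩ := he
          have : (2:ℕ) ∣ Nat.gcd r 4 := Nat.dvd_gcd ⟨t, by omega⟩ ⟨2, rfl⟩
          rw [hrd] at this
          omega
        · rw [Nat.odd_iff] at ho; exact ho
      obtain ⟨s, hs⟩ : ∃ s, r = 2*s+1 := ⟨r/2, by omega⟩
      rw [hs, show (2*π*((2*s+1:ℕ):ℝ)/((4:ℕ):ℝ)) = π/2 + s*π by push_cast; ring]
      rw [Real.cos_add]
      simp [Real.sin_nat_mul_pi]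
  · right; right
    constructor
    · exact ⟨g, by rw [← hmg, h6]⟩
    · rw [h6] at hrd ⊢
      have h2 : ¬ (2 ∣ r) := by
        intro hdvd
        have : (2:ℕ) ∣ Nat.gcd r 6 := Nat.dvd_gcd hdvd ⟨3, rfl⟩
        rw [hrd] at this; omega
      have h3 : ¬ (3 ∣ r) := by
        intro hdvd
        have : (3:ℕ) ∣ Nat.gcd r 6 := Nat.dvd_gcd hdvd ⟨2, rfl⟩
        rw [hrd] at this; omega
      have hr6 : r % 6 = 1 ∨ r % 6 = 5 := by omega
      rcases hr6 with h | h
      · obtain ⟨s, hs⟩ : ∃ s, r = 6*s+1 := ⟨r/6, by omega⟩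
        rw [hs, show (2*π*((6*s+1:ℕ):ℝ)/((6:ℕ):ℝ)) = π/3 + (s:ℤ)*(2*π) by push_cast; ring]
        rw [Real.cos_add_int_mul_two_pi, Real.cos_pi_div_three]
      · obtain ⟨s, hs⟩ : ∃ s, r = 6*s+5 := ⟨r/6, by omega⟩
        rw [hs, show (2*π*((6*s+5:ℕ):ℝ)/((6:ℕ):ℝ)) = -(π/3) + ((((s:ℤ)+1) : ℤ):ℝ)*(2*π) by push_cast; ring]
        rw [Real.cos_add_int_mul_two_pi, Real.cos_neg, Real.cos_pi_div_three]

end Aux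
lemma bound_pair {x y : ℝ} (hx1 : -1 ≤ x) (hx2 : x ≤ 1) (hy1 : -1 ≤ y) (hy2 : y ≤ 1)
    (h : (1 + 2*x) * (1 + 2*y) = 2) : -(1/6) ≤ x ∧ -(1/6) ≤ y := by
  constructor <;> nlinarith [sq_nonneg (x+y), sq_nonneg (x-y), sq_nonneg (x+1), sq_nonneg (y+1)]

theorem stmt_10 (m n : ℕ) (hm : 3 ≤ m) (hn : 3 ≤ n) :
    (∃ p q : ℕ, 1 ≤ p ∧ p ≤ m ∧ 1 ≤ q ∧ q ≤ n ∧
      (1 + 2 * Real.cos (2 * p * π / m)) * (1 + 2 * Real.cos (2 * q * π / n)) = 2)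
    ↔ ((4 ∣ m ∧ 6 ∣ n) ∨ (6 ∣ m ∧ 4 ∣ n)) := by
  have hm0 : 0 < m := by omega
  have hn0 : 0 < n := by omega
  have hmR : (m:ℝ) ≠ 0 := Nat.cast_ne_zero.mpr hm0.ne'
  have hnR : (n:ℝ) ≠ 0 := Nat.cast_ne_zero.mpr hn0.ne'
  constructor
  · rintro ⟨p, q, hp1, hpm, hq1, hqn, h⟩
    have hp0 : 0 < p := hp1
    have hq0 : 0 < q := hq1
    set L := Nat.lcm m n with hLdef
    have hL : 0 < L := Nat.pos_of_ne_zero (Nat.lcm_ne_zero hm0.ne' hn0.ne')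
    have hmL : m ∣ L := Nat.dvd_lcm_left m n
    have hnL : n ∣ L := Nat.dvd_lcm_right m n
    have hcm : m * (L / m) = L := Nat.mul_div_cancel' hmL
    have hcn : n * (L / n) = L := Nat.mul_div_cancel' hnL
    have hcm0 : ((L/m : ℕ):ℝ) ≠ 0 := by
      have : 0 < L / m := Nat.div_pos (Nat.le_of_dvd hL hmL) hm0
      exact_mod_cast this.ne'
    have hcn0 : ((L/n : ℕ):ℝ) ≠ 0 := by
      have : 0 < L / n := Nat.div_pos (Nat.le_of_dvd hL hnL) hn0
      exact_mod_cast this.ne'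
    have hLa : ∀ k : ℕ, (2*π*((k*(p*(L/m)):ℕ):ℝ)/L) = 2*π*((k*p:ℕ):ℝ)/m := by
      intro k
      rw [← hcm, Nat.mul_div_cancel_left _ hm0]
      push_cast
      field_simp
    have hLb : ∀ k : ℕ, (2*π*((k*(q*(L/n)):ℕ):ℝ)/L) = 2*π*((k*q:ℕ):ℝ)/n := by
      intro k
      rw [← hcn, Nat.mul_div_cancel_left _ hn0]
      push_cast
      field_simp
    have eA : 2*π*((p*(L/m):ℕ):ℝ)/L = 2*(p:ℝ)*π/m := by
      rw [← hcm, Nat.mul_div_cancel_left _ hm0]; push_cast; field_simp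
    have eB : 2*π*((q*(L/n):ℕ):ℝ)/L = 2*(q:ℝ)*π/n := by
      rw [← hcn, Nat.mul_div_cancel_left _ hn0]; push_cast; field_simp
    have h' : (1 + 2*Real.cos (2*π*((p*(L/m):ℕ):ℝ)/L))
        * (1 + 2*Real.cos (2*π*((q*(L/n):ℕ):ℝ)/L)) = 2 := by
      rw [eA, eB]; exact h
    have Hcos : ∀ k, Nat.Coprime k L →
        -(1/6) ≤ Real.cos (2*π*((k*p:ℕ):ℝ)/m) ∧ -(1/6) ≤ Real.cos (2*π*((k*q:ℕ):ℝ)/n) := by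
      intro k hk
      have hc := conj_eq L hL (p*(L/m)) (q*(L/n)) k hk h'
      have e1 : 2*π*((k:ℝ)*((p*(L/m):ℕ):ℝ))/L = 2*π*((k*p:ℕ):ℝ)/m := by
        rw [← hLa k]; push_cast; ring
      have e2 : 2*π*((k:ℝ)*((q*(L/n):ℕ):ℝ))/L = 2*π*((k*q:ℕ):ℝ)/n := by
        rw [← hLb k]; push_cast; ring
      rw [e1, e2] at hc
      exact bound_pair (Real.neg_one_le_cos _) (Real.cos_le_one _)
        (Real.neg_one_le_cos _) (Real.cos_le_one _) hc
    -- totative bound machinery, applied to (m,p) and (n,q)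
    have Htot : ∀ (M P : ℕ), 0 < M → 0 < P → M ∣ L →
        (∀ k, Nat.Coprime k L → -(1/6) ≤ Real.cos (2*π*((k*P:ℕ):ℝ)/M)) →
        M / Nat.gcd P M = 1 ∨ M / Nat.gcd P M = 4 ∨ M / Nat.gcd P M = 6 := by
      intro M P hM hP hML HC
      set g := Nat.gcd P M with hgdef
      have hg : 0 < g := Nat.gcd_pos_of_pos_left M hP
      set r := P / g with hrdef
      set d := M / g with hddef
      have hrd : Nat.Coprime r d := Nat.coprime_div_gcd_div_gcd hg
      have hpg : r * g = P := Nat.div_mul_cancel (Nat.gcd_dvd_left P M)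
      have hmg : d * g = M := Nat.div_mul_cancel (Nat.gcd_dvd_right P M)
      have hd0 : 0 < d := Nat.div_pos (Nat.le_of_dvd hM (Nat.gcd_dvd_right P M)) hg
      have hdL : d ∣ L := (Nat.div_dvd_of_dvd (Nat.gcd_dvd_right P M)).trans hML
      refine sieve d hd0 ?_
      intro j hj
      obtain ⟨k, hk, hmod⟩ := lift_unit_s10 d L r j hdL hL hrd hj
      have hb := HC k hk
      have hdvd : (d:ℤ) ∣ (j:ℤ) - ((k*r : ℕ):ℤ) := (show Nat.ModEq d (k*r) j from hmod).dvd
      obtain ⟨t, ht⟩ := hdvd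
      have hkr : (k:ℝ)*(r:ℝ) = (j:ℝ) - (d:ℝ)*(t:ℝ) := by
        have : ((k*r : ℕ):ℤ) = (j:ℤ) - d*t := by omega
        exact_mod_cast congrArg (Int.cast : ℤ → ℝ) this
      have hPR : (P:ℝ) = r*g := by exact_mod_cast hpg.symm
      have hMR : (M:ℝ) = d*g := by exact_mod_cast hmg.symm
      have hdR : (d:ℝ) ≠ 0 := Nat.cast_ne_zero.mpr hd0.ne'
      have hgR : (g:ℝ) ≠ 0 := Nat.cast_ne_zero.mpr hg.ne'
      have earg : 2*π*((k*P:ℕ):ℝ)/M = 2*π*(j:ℝ)/d + ((-t : ℤ):ℝ)*(2*π) := by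
        push_cast [hPR, hMR]
        field_simp
        linear_combination hkr
      rw [earg, Real.cos_add_int_mul_two_pi] at hb
      exact hb
    have hdm := Htot m p hm0 hp0 hmL (fun k hk => (Hcos k hk).1)
    have hdn := Htot n q hn0 hq0 hnL (fun k hk => (Hcos k hk).2)
    have hvm := cos_val m p hp0 hm0 hdm
    have hvn := cos_val n q hq0 hn0 hdn
    rcases hvm with hv1 | ⟨h4m, hv1⟩ | ⟨h6m, hv1⟩ <;>
      rcases hvn with hv2 | ⟨h4n, hv2⟩ | ⟨h6n, hv2⟩ <;>
      rw [hv1, hv2] at h <;> norm_num at h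
    · exact Or.inl ⟨h4m, h6n⟩
    · exact Or.inr ⟨h6m, h4n⟩
  · rintro (⟨h4m, h6n⟩ | ⟨h6m, h4n⟩)
    · obtain ⟨p, hp⟩ := h4m
      obtain ⟨q, hq⟩ := h6n
      have hp0 : 0 < p := by omega
      have hq0 : 0 < q := by omega
      refine ⟨p, q, hp0, by omega, hq0, by omega, ?_⟩
      have hpR : (p:ℝ) ≠ 0 := Nat.cast_ne_zero.mpr hp0.ne'
      have e1 : 2*(p:ℝ)*π/m = π/2 := by
        rw [hp]; push_cast; field_simp; ring
      have e2 : 2*(q:ℝ)*π/n = π/3 := by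
        rw [hq]; push_cast; field_simp; ring
      rw [e1, e2, Real.cos_pi_div_two, Real.cos_pi_div_three]
      norm_num
    · obtain ⟨p, hp⟩ := h6m
      obtain ⟨q, hq⟩ := h4n
      have hp0 : 0 < p := by omega
      have hq0 : 0 < q := by omega
      refine ⟨p, q, hp0, by omega, hq0, by omega, ?_⟩
      have e1 : 2*(p:ℝ)*π/m = π/3 := by
        rw [hp]; push_cast; field_simp; ring
      have e2 : 2*(q:ℝ)*π/n = π/2 := by
        rw [hq]; push_cast; field_simp; ring
      rw [e1, e2, Real.cos_pi_div_two, Real.cos_pi_div_three]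
      norm_num
end

section
/- Define g(m) = ∏_{1 ≤ a < m/2, gcd(a,m)=1} (1 + 2cos(2πa/m)). Then g(m) = Φ_m(ζ_3)·ζ_3^{−φ(m)/2}·(−1)^{φ(m)/2}, where ζ_3 = e^{2πi/3} and Φ_m is the m-th cyclotomic polynomial. -/
open Real Polynomial Complex

theorem stmt_16 (m : ℕ) (hm : 3 < m) :
    ((∏ a ∈ (Finset.range m).filter (fun a => 1 ≤ a ∧ 2 * a < m ∧ Nat.gcd a m = 1),
        (1 + 2 * Real.cos (2 * π * a / m)) : ℝ) : ℂ)
      = (Polynomial.cyclotomic m ℂ).eval (Complex.exp (2 * π * Complex.I / 3)) *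
          (Complex.exp (2 * π * Complex.I / 3)) ^ (-(m.totient / 2 : ℤ)) *
          (-1) ^ (m.totient / 2) := by
  have hm0 : (m : ℕ) ≠ 0 := by omega
  haveI : NeZero m := ⟨hm0⟩
  set ζ : ℂ := Complex.exp (2 * π * Complex.I / 3) with hζ
  set ω : ℂ := Complex.exp (2 * π * Complex.I / m) with hωdef
  have hω : IsPrimitiveRoot ω m := Complex.isPrimitiveRoot_exp m hm0
  set S₁ : Finset ℕ := (Finset.range m).filter
      (fun a => 1 ≤ a ∧ 2 * a < m ∧ Nat.gcd a m = 1) with hS₁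
  set S₂ : Finset ℕ := (Finset.range m).filter
      (fun a => 1 ≤ a ∧ m < 2 * a ∧ Nat.gcd a m = 1) with hS₂
  set T : Finset ℕ := (Finset.range m).filter (fun a => Nat.gcd a m = 1) with hT
  -- no a with 2a = m in T
  have hhalf : ∀ a, Nat.gcd a m = 1 → 2 * a ≠ m := by
    intro a hg he
    have : a ∣ m := ⟨2, by omega⟩
    have h1 : Nat.gcd a m = a := Nat.gcd_eq_left this
    omega
  have hzero : ∀ a ∈ T, 1 ≤ a := by
    intro a ha
    simp only [hT, Finset.mem_filter, Finset.mem_range] at ha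
    rcases Nat.eq_zero_or_pos a with h | h
    · subst h; simp [Nat.gcd_zero_left] at ha; omega
    · exact h
  have hco : ∀ a : ℕ, 1 ≤ a → a < m → Nat.gcd a m = 1 → Nat.gcd (m - a) m = 1 := by
    intro a h1 h2 h4
    have e1 := Nat.gcd_sub_self_right (m := m - a) (n := m) (by omega)
    have e2 : m - (m - a) = a := by omega
    rw [e2] at e1
    rw [← e1, Nat.gcd_sub_self_left (by omega : a ≤ m), Nat.gcd_comm]
    exact h4
  have hT1 : T.filter (fun a => 2 * a < m) = S₁ := by
    ext a
    simp only [hT, hS₁, Finset.mem_filter, Finset.mem_range]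
    constructor
    · rintro ⟨⟨h1, h2⟩, h3⟩
      have h5 : 1 ≤ a := by
        rcases Nat.eq_zero_or_pos a with h | h
        · subst h; simp [Nat.gcd_zero_left] at h2; omega
        · exact h
      exact ⟨h1, h5, h3, h2⟩
    · rintro ⟨h1, h2, h3, h4⟩
      exact ⟨⟨h1, h4⟩, h3⟩
  have hT2 : T.filter (fun a => ¬ 2 * a < m) = S₂ := by
    ext a
    simp only [hT, hS₂, Finset.mem_filter, Finset.mem_range]
    constructor
    · rintro ⟨⟨h1, h2⟩, h3⟩
      have := hhalf a h2
      have h5 : 1 ≤ a := by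
        rcases Nat.eq_zero_or_pos a with h | h
        · subst h; simp [Nat.gcd_zero_left] at h2; omega
        · exact h
      exact ⟨h1, h5, by omega, h2⟩
    · rintro ⟨h1, h2, h3, h4⟩
      exact ⟨⟨h1, h4⟩, by omega⟩
  have hTsplit : T.filter (fun a => 2 * a < m) = S₁ ∧ T.filter (fun a => ¬ 2 * a < m) = S₂ :=
    ⟨hT1, hT2⟩
  -- totient = card T
  have hTot : m.totient = T.card := by
    rw [Nat.totient_eq_card_coprime]
    congr 1
    ext a
    simp only [hT, Finset.mem_filter, Finset.mem_range, Nat.Coprime]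
    rw [Nat.gcd_comm]
  -- card S₂ = card S₁ via a ↦ m - a, and same for products
  have hmem12 : ∀ a ∈ S₁, m - a ∈ S₂ := by
    intro a ha
    simp only [hS₁, hS₂, Finset.mem_filter, Finset.mem_range] at ha ⊢
    obtain ⟨h1, h2, h3, h4⟩ := ha
    exact ⟨by omega, by omega, by omega, hco a h2 h1 h4⟩
  have hmem21 : ∀ a ∈ S₂, m - a ∈ S₁ := by
    intro a ha
    simp only [hS₁, hS₂, Finset.mem_filter, Finset.mem_range] at ha ⊢
    obtain ⟨h1, h2, h3, h4⟩ := ha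
    exact ⟨by omega, by omega, by omega, hco a h2 h1 h4⟩
  have hinv2 : ∀ a ∈ S₂, m - (m - a) = a := by
    intro a ha
    simp only [hS₂, Finset.mem_filter, Finset.mem_range] at ha
    omega
  have hinv1 : ∀ a ∈ S₁, m - (m - a) = a := by
    intro a ha
    simp only [hS₁, Finset.mem_filter, Finset.mem_range] at ha
    omega
  have hbij : ∀ (f : ℕ → ℂ), ∏ a ∈ S₂, f a = ∏ a ∈ S₁, f (m - a) := by
    intro f
    refine Finset.prod_nbij' (fun a => m - a) (fun a => m - a) hmem21 hmem12 hinv2 hinv1 ?_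
    intro a ha
    rw [hinv2 a ha]
  have hcard : S₂.card = S₁.card :=
    Finset.card_nbij' (fun a => m - a) (fun a => m - a) hmem21 hmem12 hinv2 hinv1
  have hTcard : T.card = 2 * S₁.card := by
    rw [← hTsplit.1, ← hTsplit.2] at *
    have := Finset.card_filter_add_card_filter_not (s := T) (p := fun a => 2 * a < m)
    omega
  have htot2 : m.totient / 2 = S₁.card := by omega
  -- cyclotomic eval as product over T
  have heval : (Polynomial.cyclotomic m ℂ).eval ζ = ∏ a ∈ T, (ζ - ω ^ a) := by
    rw [cyclotomic_eq_prod_X_sub_primitiveRoots hω]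
    rw [Polynomial.eval_prod]
    simp only [Polynomial.eval_sub, Polynomial.eval_X, Polynomial.eval_C]
    refine (Finset.prod_nbij (fun a => ω ^ a) ?_ ?_ ?_ (fun a _ => rfl)).symm
    · intro a ha
      simp only [hT, Finset.mem_filter, Finset.mem_range] at ha
      rw [mem_primitiveRoots (Nat.pos_of_ne_zero hm0)]
      exact hω.pow_of_coprime a ha.2
    · intro a ha b hb hab
      simp only [hT, Finset.coe_filter, Set.mem_setOf_eq, Finset.mem_range] at ha hb
      exact hω.pow_inj ha.1 hb.1 hab
    · intro μ hμ
      simp only [Finset.coe_sort_coe, Finset.mem_coe] at hμ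
      rw [mem_primitiveRoots (Nat.pos_of_ne_zero hm0), hω.isPrimitiveRoot_iff] at hμ
      obtain ⟨i, hi1, hi2, hi3⟩ := hμ
      refine ⟨i, ?_, hi3⟩
      simp only [hT, Finset.coe_filter, Set.mem_setOf_eq, Finset.mem_range]
      exact ⟨hi1, hi2⟩
  -- split product
  have hsplit : ∏ a ∈ T, (ζ - ω ^ a)
      = (∏ a ∈ S₁, (ζ - ω ^ a)) * ∏ a ∈ S₁, (ζ - ω ^ (m - a)) := by
    have hps := Finset.prod_filter_mul_prod_filter_not T (fun a => 2 * a < m)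
      (fun a => ζ - ω ^ a)
    rw [hT1, hT2] at hps
    rw [← hps]
    congr 1
    exact hbij (fun a => ζ - ω ^ a)
  -- key pointwise identity
  have hkey : ∀ a ∈ S₁, (ζ - ω ^ a) * (ζ - ω ^ (m - a)) * ζ⁻¹ * (-1)
      = ((1 + 2 * Real.cos (2 * π * a / m) : ℝ) : ℂ) := by
    intro a ha
    simp only [hS₁, Finset.mem_filter, Finset.mem_range] at ha
    obtain ⟨h1, h2, h3, h4⟩ := ha
    have hωa : ω ^ a = Complex.exp ((2 * π * a / m : ℝ) * Complex.I) := by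
      rw [hωdef, ← Complex.exp_nat_mul]
      congr 1
      push_cast
      have : (m : ℂ) ≠ 0 := by exact_mod_cast hm0
      field_simp
    have hωma : ω ^ (m - a) = Complex.exp (-((2 * π * a / m : ℝ) * Complex.I)) := by
      have h5 : ω ^ (m - a) * ω ^ a = 1 := by
        rw [← pow_add]
        have : m - a + a = m := by omega
        rw [this, hω.pow_eq_one]
      have h6 : Complex.exp (-((2 * π * a / m : ℝ) * Complex.I)) * ω ^ a = 1 := by
        rw [hωa, ← Complex.exp_add]
        simp
      have h7 : ω ^ a ≠ 0 := by
        rw [hωa]; exact Complex.exp_ne_zero _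
      exact mul_right_cancel₀ h7 (h5.trans h6.symm)
    have hcos : ω ^ a + ω ^ (m - a) = 2 * Complex.cos ((2 * π * a / m : ℝ)) := by
      rw [hωa, hωma, Complex.two_cos]
      ring_nf
    have hζinv : ζ⁻¹ = Complex.exp (-(2 * π * Complex.I / 3)) := by
      rw [hζ, ← Complex.exp_neg]
    have hζsum : ζ + ζ⁻¹ = -1 := by
      rw [hζ, hζinv]
      have e1 : (2 : ℂ) * π * Complex.I / 3 = ((2 * π / 3 : ℝ) : ℂ) * Complex.I := by
        push_cast; ring
      rw [e1, ← neg_mul, show (-((2 * π / 3 : ℝ) : ℂ)) = ((-(2 * π / 3) : ℝ) : ℂ) by push_cast; ring]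
      rw [Complex.exp_mul_I, Complex.exp_mul_I]
      rw [← Complex.ofReal_cos, ← Complex.ofReal_sin, ← Complex.ofReal_cos, ← Complex.ofReal_sin]
      rw [Real.cos_neg, Real.sin_neg]
      have : Real.cos (2 * π / 3) = -(1 / 2) := by
        have : 2 * π / 3 = π - π / 3 := by ring
        rw [this, Real.cos_pi_sub, Real.cos_pi_div_three]
      rw [this]
      push_cast
      ring
    have hζne : ζ ≠ 0 := Complex.exp_ne_zero _
    have hωprod : ω ^ a * ω ^ (m - a) = 1 := by
      rw [← pow_add]
      have : a + (m - a) = m := by omega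
      rw [this, hω.pow_eq_one]
    have expand : (ζ - ω ^ a) * (ζ - ω ^ (m - a)) * ζ⁻¹ * (-1)
        = -(ζ + ζ⁻¹ * (ω ^ a * ω ^ (m - a))) + (ω ^ a + ω ^ (m - a)) := by
      field_simp
      ring
    rw [expand, hωprod, mul_one, hζsum, hcos]
    push_cast [Complex.ofReal_cos]
    ring
  -- assemble
  rw [heval, hsplit]
  have hz1 : ζ ^ (-(m.totient / 2 : ℤ)) = (ζ⁻¹) ^ (m.totient / 2) := by
    rw [zpow_neg, ← inv_zpow]
    norm_cast
  rw [hz1, htot2]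
  rw [Complex.ofReal_prod]
  rw [← Finset.prod_mul_distrib]
  have : ((∏ a ∈ S₁, (ζ - ω ^ a) * (ζ - ω ^ (m - a))) * ζ⁻¹ ^ S₁.card * (-1) ^ S₁.card)
      = ∏ a ∈ S₁, ((ζ - ω ^ a) * (ζ - ω ^ (m - a)) * ζ⁻¹ * (-1)) := by
    simp only [Finset.prod_mul_distrib, Finset.prod_const]
  rw [this]
  exact (Finset.prod_congr rfl hkey).symm
end

section
/- For a prime p > 3, g(p) := ∏_{1 ≤ a < p/2} (1 + 2cos(2πa/p)) equals the Legendre symbol (3/p); in particular g(p) = 1 if p ≡ ±1 (mod 12) and g(p) = −1 if p ≡ ±5 (mod 12). -/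
open Real

private def rfun (p a : ℕ) : ℕ := if 3 * a < p then 3 * a else 3 * a - p

private def tfun (p a : ℕ) : ℕ := if 2 * rfun p a < p then rfun p a else p - rfun p a

theorem stmt_17 (p : ℕ) [hp : Fact p.Prime] (hp3 : 3 < p) :
    (∏ a ∈ (Finset.range p).filter (fun a => 1 ≤ a ∧ 2 * a < p),
        (1 + 2 * Real.cos (2 * π * a / p)) : ℝ) = (legendreSym p 3 : ℝ) ∧
    ((p % 12 = 1 ∨ p % 12 = 11) →
      (∏ a ∈ (Finset.range p).filter (fun a => 1 ≤ a ∧ 2 * a < p),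
        (1 + 2 * Real.cos (2 * π * a / p)) : ℝ) = 1) ∧
    ((p % 12 = 5 ∨ p % 12 = 7) →
      (∏ a ∈ (Finset.range p).filter (fun a => 1 ≤ a ∧ 2 * a < p),
        (1 + 2 * Real.cos (2 * π * a / p)) : ℝ) = -1) := by
  have hpp := hp.out
  have hp2 : p % 2 = 1 := hpp.eq_two_or_odd.resolve_left (by omega)
  have hp3' : p % 3 ≠ 0 := by
    intro h
    have h3 : (3 : ℕ) ∣ p := Nat.dvd_of_mod_eq_zero h
    have := (Nat.prime_dvd_prime_iff_eq (by norm_num) hpp).mp h3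
    omega
  have hppos : (0 : ℝ) < p := by exact_mod_cast (by omega : 0 < p)
  have hpne : (p : ℝ) ≠ 0 := ne_of_gt hppos
  set T := Finset.Ico 1 (p / 2 + 1) with hT
  have hSet : (Finset.range p).filter (fun a => 1 ≤ a ∧ 2 * a < p) = T := by
    ext x
    simp only [hT, Finset.mem_filter, Finset.mem_range, Finset.mem_Ico]
    omega
  have hmemT : ∀ a ∈ T, 1 ≤ a ∧ 2 * a < p := by
    intro a ha
    simp only [hT, Finset.mem_Ico] at ha
    omega
  -- basic facts about rfun
  have hrfacts : ∀ a, 1 ≤ a → 2 * a < p → 1 ≤ rfun p a ∧ rfun p a < p := by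
    intro a h1 h2
    unfold rfun
    split_ifs <;> omega
  -- tfun maps T into T
  have hmem : ∀ a ∈ T, tfun p a ∈ T := by
    intro a ha
    obtain ⟨h1, h2⟩ := hmemT a ha
    obtain ⟨hr1, hr2⟩ := hrfacts a h1 h2
    simp only [hT, Finset.mem_Ico]
    unfold tfun
    split_ifs <;> omega
  -- tfun is injective on T
  have hinj : ∀ a₁ ∈ T, ∀ a₂ ∈ T, tfun p a₁ = tfun p a₂ → a₁ = a₂ := by
    intro a₁ ha₁ a₂ ha₂ h
    obtain ⟨h11, h12⟩ := hmemT a₁ ha₁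
    obtain ⟨h21, h22⟩ := hmemT a₂ ha₂
    unfold tfun rfun at h
    split_ifs at h <;> omega
  have hsurj : ∀ b ∈ T, ∃ a, ∃ ha : a ∈ T, tfun p a = b := by
    intro b hb
    obtain ⟨a, ha, hab⟩ := Finset.surj_on_of_inj_on_of_card_le (fun a _ => tfun p a)
      (fun a ha => hmem a ha) (fun a₁ a₂ ha₁ ha₂ h => hinj a₁ ha₁ a₂ ha₂ h) le_rfl b hb
    exact ⟨a, ha, hab.symm⟩
  -- positivity of sines
  have hsinpos : ∀ a ∈ T, 0 < Real.sin (π * a / p) := by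
    intro a ha
    obtain ⟨h1, h2⟩ := hmemT a ha
    apply Real.sin_pos_of_pos_of_lt_pi
    · have h0 : (0 : ℝ) < (a : ℝ) := by exact_mod_cast h1
      positivity
    · have hap : (a : ℝ) < p := by exact_mod_cast (by omega : a < p)
      rw [div_lt_iff₀ hppos]
      exact (mul_lt_mul_iff_right₀ Real.pi_pos).mpr hap
  -- the term identity
  have hterm : ∀ a ∈ T, Real.sin (π * a / p) * (1 + 2 * Real.cos (2 * π * a / p))
      = Real.sin (3 * (π * a / p)) := by
    intro a _
    have h2x : 2 * π * (a : ℝ) / p = 2 * (π * a / p) := by ring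
    rw [h2x, Real.cos_two_mul, Real.sin_three_mul]
    have hs := Real.sin_sq_add_cos_sq (π * (a : ℝ) / p)
    linear_combination 4 * Real.sin (π * (a : ℝ) / p) * hs
  -- sign and folding identity
  have hsign : ∀ a ∈ T, Real.sin (3 * (π * a / p))
      = (if p < 3 * a then (-1 : ℝ) else 1) * Real.sin (π * (tfun p a) / p) := by
    intro a ha
    obtain ⟨h1, h2⟩ := hmemT a ha
    obtain ⟨hr1, hr2⟩ := hrfacts a h1 h2
    have key1 : Real.sin (3 * (π * a / p))
        = (if p < 3 * a then (-1 : ℝ) else 1) * Real.sin (π * (rfun p a) / p) := by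
      by_cases h : 3 * a < p
      · rw [if_neg (by omega : ¬ p < 3 * a)]
        unfold rfun
        rw [if_pos h, one_mul]
        congr 1
        push_cast
        ring
      · have hple : p ≤ 3 * a := by omega
        have h3a : p < 3 * a := by omega
        rw [if_pos h3a]
        unfold rfun
        rw [if_neg h]
        have hcast : ((3 * a - p : ℕ) : ℝ) = 3 * (a : ℝ) - p := by
          rw [Nat.cast_sub hple]; push_cast; ring
        have harg : 3 * (π * (a : ℝ) / p) = π * ((3 * a - p : ℕ) : ℝ) / p + π := by
          rw [hcast]; field_simp; ring
        rw [harg, Real.sin_add_pi]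
        ring
    have key2 : Real.sin (π * (rfun p a) / p) = Real.sin (π * (tfun p a) / p) := by
      unfold tfun
      by_cases h : 2 * rfun p a < p
      · rw [if_pos h]
      · rw [if_neg h]
        have harg : π * ((rfun p a : ℕ) : ℝ) / p = π - π * ((p - rfun p a : ℕ) : ℝ) / p := by
          rw [Nat.cast_sub hr2.le]; field_simp; ring
        rw [harg, Real.sin_pi_sub]
    rw [key1, key2]
  set N := (T.filter (fun a => p < 3 * a)).card with hN
  -- bijection product identity
  have hbij : ∏ a ∈ T, Real.sin (π * (tfun p a) / p) = ∏ a ∈ T, Real.sin (π * a / p) :=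
    Finset.prod_bij (fun a _ => tfun p a) hmem (fun a₁ ha₁ a₂ ha₂ h => hinj a₁ ha₁ a₂ ha₂ h)
      hsurj (fun a ha => rfl)
  have hsigns : ∏ a ∈ T, (if p < 3 * a then (-1 : ℝ) else 1) = (-1 : ℝ) ^ N := by
    rw [Finset.prod_ite, Finset.prod_const, Finset.prod_const, one_pow, mul_one, hN]
  have h2 : ∏ a ∈ T, Real.sin (3 * (π * a / p))
      = (-1 : ℝ) ^ N * ∏ a ∈ T, Real.sin (π * a / p) := by
    rw [Finset.prod_congr rfl hsign, Finset.prod_mul_distrib, hbij, hsigns]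
  have hne : (∏ a ∈ T, Real.sin (π * a / p)) ≠ 0 :=
    Finset.prod_ne_zero_iff.mpr (fun a ha => (hsinpos a ha).ne')
  have hmain : (∏ a ∈ T, (1 + 2 * Real.cos (2 * π * a / p)) : ℝ) = (-1 : ℝ) ^ N := by
    apply mul_left_cancel₀ hne
    rw [← Finset.prod_mul_distrib, Finset.prod_congr rfl hterm, h2]
    ring
  -- compute N
  have e1 : T.filter (fun a => p < 3 * a) = Finset.Ico (p / 3 + 1) (p / 2 + 1) := by
    ext x
    simp only [hT, Finset.mem_filter, Finset.mem_Ico]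
    omega
  have hNval : N = p / 2 - p / 3 := by
    rw [hN, e1, Nat.card_Ico]
    omega
  -- Gauss' lemma
  have h30 : ((3 : ℤ) : ZMod p) ≠ 0 := by
    have hc : ((3 : ℤ) : ZMod p) = ((3 : ℕ) : ZMod p) := by push_cast; ring
    rw [hc, Ne, ZMod.natCast_eq_zero_iff]
    intro h
    exact absurd (Nat.le_of_dvd (by norm_num) h) (by omega)
  have hG := ZMod.gauss_lemma (p := p) (a := 3) (by omega) h30
  have hval : ∀ x ∈ Finset.Ico 1 (p / 2).succ,
      ((p / 2 < ((3 : ℤ) * (x : ℕ) : ZMod p).val) ↔ (p < 6 * x ∧ 3 * x < p)) := by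
    intro x hx
    simp only [Finset.mem_Ico] at hx
    have hcast : ((3 : ℤ) * (x : ℕ) : ZMod p) = ((3 * x : ℕ) : ZMod p) := by push_cast; ring
    rw [hcast, ZMod.val_natCast]
    have hmod : (3 * x) % p = if 3 * x < p then 3 * x else 3 * x - p := by
      split_ifs with h
      · exact Nat.mod_eq_of_lt h
      · rw [Nat.mod_eq_sub_mod (le_of_not_gt h), Nat.mod_eq_of_lt (by omega)]
    rw [hmod]
    split_ifs with h <;> omega
  have hGcard : ((Finset.Ico 1 (p / 2).succ).filter
      (fun x : ℕ => p / 2 < (((3 : ℤ) * (x : ℕ) : ZMod p)).val)).card = p / 3 - p / 6 := by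
    have e2 : (Finset.Ico 1 (p / 2).succ).filter
        (fun x : ℕ => p / 2 < (((3 : ℤ) * (x : ℕ) : ZMod p)).val)
        = Finset.Ico (p / 6 + 1) (p / 3 + 1) := by
      ext x
      simp only [Finset.mem_filter, Finset.mem_Ico, Nat.succ_eq_add_one]
      constructor
      · rintro ⟨hx, hv⟩
        have := (hval x (by simp only [Finset.mem_Ico]; exact hx)).mp hv
        omega
      · intro hx
        have hx' : 1 ≤ x ∧ x < p / 2 + 1 := by omega
        refine ⟨hx', (hval x (by simp only [Finset.mem_Ico]; exact hx')).mpr ?_⟩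
        omega
    rw [e2, Nat.card_Ico]
    omega
  have hNG : N = p / 3 - p / 6 := by rw [hNval]; omega
  have hleg : (legendreSym p 3 : ℝ) = (-1 : ℝ) ^ N := by
    rw [hG, hGcard, hNG]
    push_cast
    ring
  rw [hSet]
  refine ⟨by rw [hmain, hleg], ?_, ?_⟩
  · intro h
    rw [hmain]
    have : Even N := Nat.even_iff.mpr (by omega)
    exact this.neg_one_pow
  · intro h
    rw [hmain]
    have : Odd N := Nat.odd_iff.mpr (by omega)
    exact this.neg_one_pow
end

section
/- For d = 3: if 6 ∣ (n+1) or 15 ∣ (n+1), then there exist p₁, p₂, p₃ ∈ ℕ with 1 ≤ pᵢ ≤ n such that ∏_{i=1}^{3} (1 + 2cos(pᵢπ/(n+1))) = 2. -/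
open Real

lemma cos_three_pi_div_five : Real.cos (3 * π / 5) = (1 - Real.sqrt 5) / 4 := by
  have h2 : Real.cos (2 * π / 5) = (Real.sqrt 5 - 1) / 4 := by
    have hd : (2 : ℝ) * π / 5 = 2 * (π / 5) := by ring
    rw [hd, Real.cos_two_mul]
    nlinarith [Real.cos_pi_div_five, Real.sq_sqrt (by norm_num : (5:ℝ) ≥ 0),
      Real.sqrt_nonneg 5]
  have hd : (3 : ℝ) * π / 5 = π - 2 * π / 5 := by ring
  rw [hd, Real.cos_pi_sub, h2]; ring

theorem stmt_19 (n : ℕ) (hn : 2 ≤ n) (h : 6 ∣ (n + 1) ∨ 15 ∣ (n + 1)) :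
    ∃ p₁ p₂ p₃ : ℕ, (1 ≤ p₁ ∧ p₁ ≤ n) ∧ (1 ≤ p₂ ∧ p₂ ≤ n) ∧ (1 ≤ p₃ ∧ p₃ ≤ n) ∧
      (1 + 2 * Real.cos (p₁ * π / (n + 1))) * (1 + 2 * Real.cos (p₂ * π / (n + 1))) *
        (1 + 2 * Real.cos (p₃ * π / (n + 1))) = 2 := by
  rcases h with ⟨k, hk⟩ | ⟨k, hk⟩
  · have hk1 : 1 ≤ k := by omega
    refine ⟨2 * k, 3 * k, 3 * k, ⟨by omega, by omega⟩, ⟨by omega, by omega⟩,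
      ⟨by omega, by omega⟩, ?_⟩
    have hkR : (0:ℝ) < k := by exact_mod_cast hk1
    have hn1 : ((n:ℝ) + 1) = 6 * k := by exact_mod_cast hk
    have e1 : ((2 * k : ℕ) : ℝ) * π / (n + 1) = π / 3 := by
      push_cast [hn1]; field_simp; ring
    have e2 : ((3 * k : ℕ) : ℝ) * π / (n + 1) = π / 2 := by
      push_cast [hn1]; field_simp; ring
    rw [e1, e2, Real.cos_pi_div_three, Real.cos_pi_div_two]; norm_num
  · have hk1 : 1 ≤ k := by omega
    refine ⟨5 * k, 3 * k, 9 * k, ⟨by omega, by omega⟩, ⟨by omega, by omega⟩,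
      ⟨by omega, by omega⟩, ?_⟩
    have hkR : (0:ℝ) < k := by exact_mod_cast hk1
    have hn1 : ((n:ℝ) + 1) = 15 * k := by exact_mod_cast hk
    have e1 : ((5 * k : ℕ) : ℝ) * π / (n + 1) = π / 3 := by
      push_cast [hn1]; field_simp; ring
    have e2 : ((3 * k : ℕ) : ℝ) * π / (n + 1) = π / 5 := by
      push_cast [hn1]; field_simp; ring
    have e3 : ((9 * k : ℕ) : ℝ) * π / (n + 1) = 3 * π / 5 := by
      push_cast [hn1]; field_simp; ring
    rw [e1, e2, e3, Real.cos_pi_div_three, Real.cos_pi_div_five, cos_three_pi_div_five]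
    have : Real.sqrt 5 ^ 2 = 5 := Real.sq_sqrt (by norm_num)
    nlinarith [this]
end
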